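/- arXiv:2507.02539 — 5 statements merged into one kernel-verified Lean document; each statement's English description precedes it below -/
import Mathlib

section
/- For every positive integer n, the sum over all integer compositions α of n of the square of the number g^α of standard immaculate tableaux of shape α equals a(n), where (a(n)) is the sequence defined by a(0) = 1 and a(n) = ∑_{k=0}^{n-1} (C(n-1,k))^2 · a(k) for n ≥ 1. -/
/-- The cells of a composition shape `α`: a cell `(i, j)` for each row index `i`
and each column index `j < α_i`. -/
abbrev ImmaculateCells {n : ℕ} (α : Composition n) : Type :=
  Σ i : Fin α.length, Fin (α.blocksFun i)

/-- A bijective filling `T` of the cells of shape `α` with `{1, …, n}` (modeled as `Fin n`)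
is a standard immaculate tableau if each row is (strictly) increasing from left to right
and the first column is strictly increasing. -/
def IsStandardImmaculate {n : ℕ} (α : Composition n) (T : ImmaculateCells α ≃ Fin n) : Prop :=
  (∀ (i : Fin α.length) (j j' : Fin (α.blocksFun i)), j < j' → T ⟨i, j⟩ < T ⟨i, j'⟩) ∧
  (∀ i i' : Fin α.length, i < i' →
    T ⟨i, ⟨0, α.one_le_blocksFun i⟩⟩ < T ⟨i', ⟨0, α.one_le_blocksFun i'⟩⟩)

/-- `g α` is the number of standard immaculate tableaux of shape `α`. -/
noncomputable def g {n : ℕ} (α : Composition n) : ℕ :=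
  Nat.card {T : ImmaculateCells α ≃ Fin n // IsStandardImmaculate α T}

open Finset

/-- Prepend a block to a composition. -/
def consComp (j : ℕ) (hj : 0 < j) {m : ℕ} (β : Composition m) : Composition (j + m) :=
  ⟨j :: β.blocks, by
    intro k hk
    rcases List.mem_cons.1 hk with h | h
    · exact h ▸ hj
    · exact β.blocks_pos h, by simp [β.blocks_sum]⟩

@[simp] lemma consComp_length (j : ℕ) (hj : 0 < j) {m : ℕ} (β : Composition m) :
    (consComp j hj β).length = β.length + 1 := rfl

lemma consComp_blocksFun_zero (j : ℕ) (hj : 0 < j) {m : ℕ} (β : Composition m) (h) :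
    (consComp j hj β).blocksFun ⟨0, h⟩ = j := rfl

lemma consComp_blocksFun_succ (j : ℕ) (hj : 0 < j) {m : ℕ} (β : Composition m)
    (i : ℕ) (h : i + 1 < β.length + 1) :
    (consComp j hj β).blocksFun ⟨i + 1, h⟩ = β.blocksFun ⟨i, Nat.lt_of_succ_lt_succ h⟩ := rfl

/-- decomposition of the cells of a cons composition -/
def cellsCons (j : ℕ) (hj : 0 < j) {m : ℕ} (β : Composition m) :
    ImmaculateCells (consComp j hj β) ≃ Fin j ⊕ ImmaculateCells β where
  toFun c := match c with
    | ⟨⟨0, _⟩, t⟩ => Sum.inl t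
    | ⟨⟨i+1, hi⟩, t⟩ => Sum.inr ⟨⟨i, Nat.lt_of_succ_lt_succ hi⟩, t⟩
  invFun x := match x with
    | Sum.inl t => ⟨⟨0, Nat.succ_pos _⟩, t⟩
    | Sum.inr ⟨i, t⟩ => ⟨⟨i.1 + 1, Nat.succ_lt_succ i.2⟩, t⟩
  left_inv := by rintro ⟨⟨_ | i, hi⟩, t⟩ <;> rfl
  right_inv := by rintro (t | ⟨i, t⟩) <;> rfl

/-- cast a composition along an equality of totals -/
def castComp {n n' : ℕ} (h : n = n') (α : Composition n) : Composition n' :=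
  ⟨α.blocks, α.blocks_pos, h ▸ α.blocks_sum⟩

@[simp] lemma castComp_rfl {n : ℕ} (α : Composition n) : castComp rfl α = α := rfl

lemma g_castComp {n n' : ℕ} (h : n = n') (α : Composition n) :
    g (castComp h α) = g α := by subst h; rfl

lemma blocks_ne_nil {n : ℕ} (hn : 0 < n) (α : Composition n) : α.blocks ≠ [] := by
  intro h
  have := α.blocks_sum
  rw [h] at this
  simp at this
  omega

def compEquiv (n : ℕ) : Composition (n + 1) ≃ Σ j : Fin (n + 1), Composition (n - j) where
  toFun α :=
    have hne : α.blocks ≠ [] := blocks_ne_nil n.succ_pos α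
    have hpos : 0 < α.blocks.head hne := α.blocks_pos (List.head_mem hne)
    have hsum : α.blocks.head hne + α.blocks.tail.sum = n + 1 := by
      rw [← List.sum_cons, List.cons_head_tail]; exact α.blocks_sum
    ⟨⟨α.blocks.head hne - 1, by omega⟩,
      ⟨α.blocks.tail, fun hk => α.blocks_pos (List.mem_of_mem_tail hk), by simp; omega⟩⟩
  invFun p := castComp (by have := p.1.2; omega) (consComp (p.1.1 + 1) (Nat.succ_pos _) p.2)
  left_inv α := by
    have hne : α.blocks ≠ [] := blocks_ne_nil n.succ_pos α
    have hpos : 0 < α.blocks.head hne := α.blocks_pos (List.head_mem hne)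
    apply Composition.ext
    show (α.blocks.head hne - 1 + 1) :: α.blocks.tail = α.blocks
    rw [Nat.sub_add_cancel hpos, List.cons_head_tail]
  right_inv p := by
    rcases p with ⟨j, β⟩
    refine Sigma.ext (Fin.ext ?_) ?_
    · show (↑j + 1) - 1 = (j : ℕ); omega
    apply heq_of_eq
    apply Composition.ext
    rfl

/-- A finset and its complement partition the type. -/
def finsetSumCompl {γ : Type*} [Fintype γ] [DecidableEq γ] (s : Finset γ) :
    (↥s ⊕ ↥(sᶜ)) ≃ γ :=
  (Equiv.sumCongr (Equiv.refl _)
      (Equiv.subtypeEquivRight (fun x => by simp))).trans (Equiv.sumCompl (· ∈ s))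

@[simp] lemma finsetSumCompl_inl {γ : Type*} [Fintype γ] [DecidableEq γ] (s : Finset γ)
    (x : ↥s) : finsetSumCompl s (Sum.inl x) = (x : γ) := rfl

@[simp] lemma finsetSumCompl_inr {γ : Type*} [Fintype γ] [DecidableEq γ] (s : Finset γ)
    (x : ↥(sᶜ)) : finsetSumCompl s (Sum.inr x) = (x : γ) := rfl

lemma orderEmbOfFin_congr {γ : Type*} [LinearOrder γ] {s s' : Finset γ} (hss : s = s')
    {k : ℕ} (h : s.card = k) (h' : s'.card = k) (i : Fin k) :
    s.orderEmbOfFin h i = s'.orderEmbOfFin h' i := by subst hss; rfl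

lemma comp_zero_length {α : Composition 0} : α.length = 0 := by
  have := α.blocks_sum
  rcases hl : α.blocks with _ | ⟨a, l⟩
  · simp [Composition.length, hl]
  · exfalso
    have ha := α.blocks_pos (by rw [hl]; exact List.mem_cons_self)
    rw [hl] at this; simp at this; omega

lemma g_comp_zero (α : Composition 0) : g α = 1 := by
  have hempty : IsEmpty (ImmaculateCells α) := by
    constructor; rintro ⟨i, t⟩
    have h1 := i.2; have h2 : α.length = 0 := comp_zero_length; omega
  have hnil : IsEmpty (Fin 0) := by infer_instance
  rw [g, Nat.card_eq_one_iff_unique]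
  constructor
  · constructor
    rintro ⟨T, _⟩ ⟨T', _⟩
    ext c
    exact hempty.elim c
  · exact ⟨⟨Equiv.equivOfIsEmpty _ _, by
      constructor
      · intro i; have h1 := i.2; have h2 : α.length = 0 := comp_zero_length; omega
      · intro i; have h1 := i.2; have h2 : α.length = 0 := comp_zero_length; omega⟩⟩

lemma sum_comp_zero : ∑ α : Composition 0, g α ^ 2 = 1 := by
  have : ∀ α : Composition 0, g α ^ 2 = 1 := fun α => by rw [g_comp_zero]; rfl
  rw [Finset.sum_congr rfl (fun α _ => this α), Finset.sum_const, smul_eq_mul, mul_one]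
  rw [Finset.card_univ, composition_card]; rfl

section Main

variable {j m : ℕ}

/-- zero of `Fin (j+m)` when `0 < j` -/
def z0 (j m : ℕ) (hj : 0 < j) : Fin (j + m) :=
  ⟨0, Nat.lt_of_lt_of_le hj (Nat.le_add_right j m)⟩

variable (hj : 0 < j) (β : Composition m)

/-- conditions for a filling presented as a map from `Fin j ⊕ cells β` -/
def ISU (U : Fin j ⊕ ImmaculateCells β ≃ Fin (j + m)) : Prop :=
  (∀ t t' : Fin j, t < t' → U (Sum.inl t) < U (Sum.inl t')) ∧
  (∀ (i : Fin β.length) (t t' : Fin (β.blocksFun i)), t < t' →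
     U (Sum.inr ⟨i, t⟩) < U (Sum.inr ⟨i, t'⟩)) ∧
  (∀ i i' : Fin β.length, i < i' →
     U (Sum.inr ⟨i, ⟨0, β.one_le_blocksFun i⟩⟩) < U (Sum.inr ⟨i', ⟨0, β.one_le_blocksFun i'⟩⟩)) ∧
  (∀ i : Fin β.length, U (Sum.inl ⟨0, hj⟩) < U (Sum.inr ⟨i, ⟨0, β.one_le_blocksFun i⟩⟩))

def equivISU :
    {T : ImmaculateCells (consComp j hj β) ≃ Fin (j + m) // IsStandardImmaculate _ T} ≃
      {U : Fin j ⊕ ImmaculateCells β ≃ Fin (j + m) // ISU hj β U} :=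
  Equiv.subtypeEquiv (Equiv.equivCongr (cellsCons j hj β) (Equiv.refl _)) <| by
    intro T
    constructor
    · rintro ⟨h1, h2⟩
      refine ⟨?_, ?_, ?_, ?_⟩
      · intro t t' ht; exact h1 ⟨0, Nat.succ_pos _⟩ t t' ht
      · intro i t t' ht; exact h1 ⟨i.1 + 1, Nat.succ_lt_succ i.2⟩ t t' ht
      · intro i i' hlt
        exact h2 ⟨i.1 + 1, Nat.succ_lt_succ i.2⟩ ⟨i'.1 + 1, Nat.succ_lt_succ i'.2⟩
          (Fin.mk_lt_mk.mpr (Nat.succ_lt_succ hlt))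
      · intro i
        exact h2 ⟨0, Nat.succ_pos _⟩ ⟨i.1 + 1, Nat.succ_lt_succ i.2⟩ (Fin.mk_lt_mk.mpr (Nat.succ_pos _))
    · rintro ⟨h1, h2, h3, h4⟩
      constructor
      · rintro ⟨(_ | k), hi⟩ t t' ht
        · exact h1 t t' ht
        · exact h2 ⟨k, Nat.lt_of_succ_lt_succ hi⟩ t t' ht
      · rintro ⟨(_ | k), hi⟩ ⟨(_ | k'), hi'⟩ hlt
        · exact (Nat.not_lt_zero _ (Fin.mk_lt_mk.mp hlt)).elim
        · exact h4 ⟨k', Nat.lt_of_succ_lt_succ hi'⟩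
        · exact (Nat.not_lt_zero _ (Fin.mk_lt_mk.mp hlt)).elim
        · exact h3 ⟨k, Nat.lt_of_succ_lt_succ hi⟩ ⟨k', Nat.lt_of_succ_lt_succ hi'⟩
            (Fin.mk_lt_mk.mpr (Nat.lt_of_succ_lt_succ (Fin.mk_lt_mk.mp hlt)))

/-- the set of values in row 0 -/
def row0 (U : Fin j ⊕ ImmaculateCells β ≃ Fin (j + m)) : Finset (Fin (j + m)) :=
  Finset.image (fun t => U (Sum.inl t)) Finset.univ

lemma row0_card (U : Fin j ⊕ ImmaculateCells β ≃ Fin (j + m)) : (row0 β U).card = j := by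
  have : (fun t => U (Sum.inl t)) = (⇑U ∘ Sum.inl) := rfl
  rw [row0, this, Finset.card_image_of_injective _ (U.injective.comp Sum.inl_injective),
    Finset.card_univ, Fintype.card_fin]

lemma mem_row0_inl (U : Fin j ⊕ ImmaculateCells β ≃ Fin (j + m)) (t : Fin j) :
    U (Sum.inl t) ∈ row0 β U :=
  Finset.mem_image_of_mem _ (Finset.mem_univ t)

lemma not_mem_row0_inr (U : Fin j ⊕ ImmaculateCells β ≃ Fin (j + m))
    (c : ImmaculateCells β) : U (Sum.inr c) ∉ row0 β U := by
  rw [row0, Finset.mem_image]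
  rintro ⟨t, -, ht⟩
  exact Sum.inl_ne_inr (U.injective ht)

lemma row0_compl_card (U : Fin j ⊕ ImmaculateCells β ≃ Fin (j + m)) :
    ((row0 β U)ᶜ).card = m := by
  rw [Finset.card_compl, row0_card, Fintype.card_fin]
  omega

lemma z0_mem_row0 (U : Fin j ⊕ ImmaculateCells β ≃ Fin (j + m)) (hU : ISU hj β U) :
    z0 j m hj ∈ row0 β U := by
  obtain ⟨h1, h2, h3, h4⟩ := hU
  rcases hx : U.symm (z0 j m hj) with t | ⟨i, s⟩
  · have : U (Sum.inl t) = z0 j m hj := by rw [← hx, Equiv.apply_symm_apply]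
    rw [← this]; exact mem_row0_inl β U t
  · exfalso
    have hz : U (Sum.inr ⟨i, s⟩) = z0 j m hj := by rw [← hx, Equiv.apply_symm_apply]
    have hle : U (Sum.inr ⟨i, ⟨0, β.one_le_blocksFun i⟩⟩) ≤ U (Sum.inr ⟨i, s⟩) := by
      rcases Nat.eq_zero_or_pos s.1 with h0 | h0
      · have : s = ⟨0, β.one_le_blocksFun i⟩ := Fin.ext h0
        rw [this]
      · exact le_of_lt (h2 i ⟨0, β.one_le_blocksFun i⟩ s (Fin.mk_lt_mk.mpr h0))
    have := lt_of_lt_of_le (h4 i) hle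
    rw [hz] at this
    have hval : (U (Sum.inl ⟨0, hj⟩)).1 < 0 := this
    omega

/-- key: value 0 sits at cell (0,0) -/
lemma U_inl_zero (U : Fin j ⊕ ImmaculateCells β ≃ Fin (j + m)) (hU : ISU hj β U) :
    U (Sum.inl ⟨0, hj⟩) = z0 j m hj := by
  have hm := z0_mem_row0 hj β U hU
  rw [row0, Finset.mem_image] at hm
  obtain ⟨t, -, ht⟩ := hm
  have hle : U (Sum.inl ⟨0, hj⟩) ≤ U (Sum.inl t) := by
    rcases Nat.eq_zero_or_pos t.1 with h0 | h0
    · have : t = ⟨0, hj⟩ := Fin.ext h0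
      rw [this]
    · exact le_of_lt (hU.1 ⟨0, hj⟩ t (Fin.mk_lt_mk.mpr h0))
  rw [ht] at hle
  refine le_antisymm hle ?_
  simp [z0, Fin.le_def]

/-- tableau on the remaining rows induced by `U` -/
noncomputable def tailT (U : Fin j ⊕ ImmaculateCells β ≃ Fin (j + m)) : ImmaculateCells β ≃ Fin m :=
  (Equiv.ofInjective Sum.inr Sum.inr_injective).trans
    ((Equiv.subtypeEquiv U (fun x => by
        constructor
        · rintro ⟨c, rfl⟩
          simpa [Finset.mem_compl] using not_mem_row0_inr β U c
        · intro hc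
          rcases x with t | c
          · exact absurd (mem_row0_inl β U t) (by simpa [Finset.mem_compl] using hc)
          · exact ⟨c, rfl⟩)).trans
      (((row0 β U)ᶜ.orderIsoOfFin (row0_compl_card β U)).toEquiv.symm))

lemma tailT_spec (U : Fin j ⊕ ImmaculateCells β ≃ Fin (j + m)) (c : ImmaculateCells β) :
    ((row0 β U)ᶜ).orderEmbOfFin (row0_compl_card β U) (tailT β U c) = U (Sum.inr c) := by
  have : tailT β U c =
      ((row0 β U)ᶜ.orderIsoOfFin (row0_compl_card β U)).symm
        ⟨U (Sum.inr c), by simpa [Finset.mem_compl] using not_mem_row0_inr β U c⟩ := rfl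
  rw [this]
  have := ((row0 β U)ᶜ.orderIsoOfFin (row0_compl_card β U)).apply_symm_apply
    ⟨U (Sum.inr c), by simpa [Finset.mem_compl] using not_mem_row0_inr β U c⟩
  exact congrArg Subtype.val this

lemma tailT_lt_iff (U : Fin j ⊕ ImmaculateCells β ≃ Fin (j + m)) (c c' : ImmaculateCells β) :
    tailT β U c < tailT β U c' ↔ U (Sum.inr c) < U (Sum.inr c') := by
  rw [← tailT_spec β U c, ← tailT_spec β U c']
  exact (OrderEmbedding.lt_iff_lt _).symm

lemma tailT_isi (U : Fin j ⊕ ImmaculateCells β ≃ Fin (j + m)) (hU : ISU hj β U) :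
    IsStandardImmaculate β (tailT β U) := by
  obtain ⟨h1, h2, h3, h4⟩ := hU
  constructor
  · intro i t t' ht
    exact (tailT_lt_iff β U _ _).mpr (h2 i t t' ht)
  · intro i i' hlt
    exact (tailT_lt_iff β U _ _).mpr (h3 i i' hlt)

/-- the inverse construction -/
def bwdU (R : Finset (Fin (j + m))) (hR : R.card = j) (hRc : (Rᶜ).card = m)
    (T' : ImmaculateCells β ≃ Fin m) : Fin j ⊕ ImmaculateCells β ≃ Fin (j + m) :=
  (Equiv.sumCongr (R.orderIsoOfFin hR).toEquiv
      (T'.trans ((Rᶜ).orderIsoOfFin hRc).toEquiv)).trans (finsetSumCompl R)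

lemma bwdU_inl (R : Finset (Fin (j + m))) (hR : R.card = j) (hRc : (Rᶜ).card = m)
    (T' : ImmaculateCells β ≃ Fin m) (t : Fin j) :
    bwdU β R hR hRc T' (Sum.inl t) = R.orderEmbOfFin hR t := rfl

lemma bwdU_inr (R : Finset (Fin (j + m))) (hR : R.card = j) (hRc : (Rᶜ).card = m)
    (T' : ImmaculateCells β ≃ Fin m) (c : ImmaculateCells β) :
    bwdU β R hR hRc T' (Sum.inr c) = (Rᶜ).orderEmbOfFin hRc (T' c) := rfl

lemma image_orderEmbOfFin {γ : Type*} [LinearOrder γ] [Fintype γ] [DecidableEq γ]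
    (s : Finset γ) {k : ℕ} (h : s.card = k) :
    Finset.image (fun t => s.orderEmbOfFin h t) Finset.univ = s := by
  apply Finset.coe_inj.mp
  rw [Finset.coe_image, Finset.coe_univ, Set.image_univ]
  exact Finset.range_orderEmbOfFin s h

lemma row0_bwdU (R : Finset (Fin (j + m))) (hR : R.card = j) (hRc : (Rᶜ).card = m)
    (T' : ImmaculateCells β ≃ Fin m) : row0 β (bwdU β R hR hRc T') = R := by
  rw [row0]
  have : (fun t => bwdU β R hR hRc T' (Sum.inl t)) = (fun t => R.orderEmbOfFin hR t) := rfl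
  rw [this, image_orderEmbOfFin]

lemma bwdU_isu (R : Finset (Fin (j + m))) (hR : R.card = j) (hRc : (Rᶜ).card = m)
    (hzR : z0 j m hj ∈ R)
    (T' : ImmaculateCells β ≃ Fin m) (hT' : IsStandardImmaculate β T') :
    ISU hj β (bwdU β R hR hRc T') := by
  obtain ⟨h1, h2⟩ := hT'
  refine ⟨?_, ?_, ?_, ?_⟩
  · intro t t' ht
    exact (R.orderEmbOfFin hR).strictMono ht
  · intro i t t' ht
    exact ((Rᶜ).orderEmbOfFin hRc).strictMono (h1 i t t' ht)
  · intro i i' hlt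
    exact ((Rᶜ).orderEmbOfFin hRc).strictMono (h2 i i' hlt)
  · intro i
    rw [bwdU_inl, bwdU_inr]
    have hmem := Finset.orderEmbOfFin_mem (Rᶜ) hRc (T' ⟨i, ⟨0, β.one_le_blocksFun i⟩⟩)
    have hne : (Rᶜ).orderEmbOfFin hRc (T' ⟨i, ⟨0, β.one_le_blocksFun i⟩⟩) ≠ z0 j m hj := by
      intro h
      rw [h] at hmem
      exact (Finset.mem_compl.mp hmem) hzR
    have hmin : R.orderEmbOfFin hR ⟨0, hj⟩ = z0 j m hj := by
      rw [Finset.orderEmbOfFin_zero hR hj]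
      refine le_antisymm (Finset.min'_le _ _ hzR) ?_
      have : (z0 j m hj).1 = 0 := rfl
      exact Fin.mk_le_mk.mpr (Nat.zero_le _)
    rw [hmin]
    have : ((Rᶜ).orderEmbOfFin hRc (T' ⟨i, ⟨0, β.one_le_blocksFun i⟩⟩)).1 ≠ 0 := by
      intro h
      exact hne (Fin.ext h)
    rw [Fin.lt_def]
    have hz : (z0 j m hj).1 = 0 := rfl
    omega

noncomputable def equivSplit :
    {U : Fin j ⊕ ImmaculateCells β ≃ Fin (j + m) // ISU hj β U} ≃
      ↥(Finset.powersetCard (j - 1) (({z0 j m hj}ᶜ : Finset (Fin (j + m))))) ×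
        {T' : ImmaculateCells β ≃ Fin m // IsStandardImmaculate β T'} where
  toFun := fun ⟨U, hU⟩ =>
    (⟨(row0 β U).erase (z0 j m hj), by
        rw [Finset.mem_powersetCard]
        refine ⟨fun x hx => ?_, ?_⟩
        · rw [Finset.mem_compl, Finset.mem_singleton]
          exact Finset.ne_of_mem_erase hx
        · rw [Finset.card_erase_of_mem (z0_mem_row0 hj β U hU), row0_card]⟩,
      ⟨tailT β U, tailT_isi hj β U hU⟩)
  invFun := fun p =>
    have hzS : z0 j m hj ∉ p.1.1 := fun h => by
      have := (Finset.mem_powersetCard.mp p.1.2).1 h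
      rw [Finset.mem_compl, Finset.mem_singleton] at this; exact this rfl
    have hR : (insert (z0 j m hj) p.1.1).card = j := by
      rw [Finset.card_insert_of_notMem hzS, (Finset.mem_powersetCard.mp p.1.2).2]; omega
    have hRc : ((insert (z0 j m hj) p.1.1)ᶜ).card = m := by
      rw [Finset.card_compl, hR, Fintype.card_fin]; omega
    ⟨bwdU β _ hR hRc p.2.1,
      bwdU_isu hj β _ hR hRc (Finset.mem_insert_self _ _) p.2.1 p.2.2⟩
  left_inv := by
    rintro ⟨U, hU⟩
    apply Subtype.ext
    apply Equiv.ext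
    have hR0 : insert (z0 j m hj) ((row0 β U).erase (z0 j m hj)) = row0 β U :=
      Finset.insert_erase (z0_mem_row0 hj β U hU)
    rintro (t | c)
    · show bwdU β _ _ _ _ (Sum.inl t) = U (Sum.inl t)
      rw [bwdU_inl]
      have hmono : StrictMono (fun t : Fin j => U (Sum.inl t)) := fun a b h => hU.1 a b h
      have huniq := Finset.orderEmbOfFin_unique (row0_card β U)
        (fun x => mem_row0_inl β U x) hmono
      rw [orderEmbOfFin_congr hR0 _ (row0_card β U)]
      exact (congrFun huniq t).symm
    · show bwdU β _ _ _ _ (Sum.inr c) = U (Sum.inr c)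
      rw [bwdU_inr]
      rw [orderEmbOfFin_congr (congrArg compl hR0) _ (row0_compl_card β U)]
      exact tailT_spec β U c
  right_inv := by
    rintro ⟨⟨S, hS⟩, ⟨T', hT'⟩⟩
    have hzS : z0 j m hj ∉ S := fun h => by
      have := (Finset.mem_powersetCard.mp hS).1 h
      rw [Finset.mem_compl, Finset.mem_singleton] at this; exact this rfl
    ext1
    · apply Subtype.ext
      show (row0 β (bwdU β _ _ _ T')).erase (z0 j m hj) = S
      rw [row0_bwdU, Finset.erase_insert hzS]
    · apply Subtype.ext
      apply Equiv.ext
      intro c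
      set R := insert (z0 j m hj) S with hRdef
      have hR : R.card = j := by
        rw [hRdef, Finset.card_insert_of_notMem hzS, (Finset.mem_powersetCard.mp hS).2]; omega
      have hRc : (Rᶜ).card = m := by
        rw [Finset.card_compl, hR, Fintype.card_fin]; omega
      have hrb : row0 β (bwdU β R hR hRc T') = R := row0_bwdU β R hR hRc T'
      have h1 := tailT_spec β (bwdU β R hR hRc T') c
      rw [bwdU_inr] at h1
      rw [orderEmbOfFin_congr (congrArg compl hrb) _ hRc] at h1
      exact ((Rᶜ).orderEmbOfFin hRc).injective h1

lemma g_cons : g (consComp j hj β) = Nat.choose (j + m - 1) (j - 1) * g β := by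
  rw [g, Nat.card_congr ((equivISU hj β).trans (equivSplit hj β)), Nat.card_prod]
  congr 1
  · rw [Nat.card_eq_fintype_card, Fintype.card_coe, Finset.card_powersetCard]
    congr 1
    rw [Finset.card_compl, Finset.card_singleton, Fintype.card_fin]

end Main

noncomputable def G (k : ℕ) : ℕ := ∑ α : Composition k, g α ^ 2

lemma G_succ (n : ℕ) : G (n + 1) = ∑ j : Fin (n + 1), Nat.choose n j.1 ^ 2 * G (n - j.1) := by
  rw [G, ← Equiv.sum_comp (compEquiv n).symm (fun α => g α ^ 2)]
  rw [← Finset.univ_sigma_univ, Finset.sum_sigma]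
  refine Finset.sum_congr rfl (fun j _ => ?_)
  rw [G, Finset.mul_sum]
  refine Finset.sum_congr rfl (fun β _ => ?_)
  have hcast : j.1 + 1 + (n - j.1) = n + 1 := by have := j.2; omega
  show g (castComp hcast (consComp (j.1 + 1) (Nat.succ_pos _) β)) ^ 2 = _
  rw [g_castComp, g_cons]
  have h1 : j.1 + 1 + (n - j.1) - 1 = n := by have := j.2; omega
  have h2 : j.1 + 1 - 1 = j.1 := rfl
  rw [h1, h2, mul_pow]

lemma G_eq (a : ℕ → ℕ) (ha0 : a 0 = 1)
    (harec : ∀ n : ℕ, 0 < n →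
      a n = ∑ k ∈ Finset.range n, (Nat.choose (n - 1) k) ^ 2 * a k) :
    ∀ n : ℕ, G n = a n := by
  intro n
  induction n using Nat.strong_induction_on with
  | _ n ih =>
    match n with
    | 0 => rw [G, sum_comp_zero, ha0]
    | n + 1 =>
      rw [G_succ, harec (n + 1) (Nat.succ_pos n)]
      have hn1 : n + 1 - 1 = n := rfl
      rw [hn1]
      rw [Fin.sum_univ_eq_sum_range (fun j => Nat.choose n j ^ 2 * G (n - j)) (n + 1)]
      rw [← Finset.sum_range_reflect (fun j => Nat.choose n j ^ 2 * G (n - j)) (n + 1)]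
      refine Finset.sum_congr rfl (fun k hk => ?_)
      rw [Finset.mem_range] at hk
      have hk' : k ≤ n := by omega
      have e1 : n + 1 - 1 - k = n - k := by omega
      rw [e1, Nat.choose_symm hk', Nat.sub_sub_self hk', ih k (by omega)]

/-- For every positive integer `n`, `∑_{α ⊨ n} (g^α)² = a n`, where `a 0 = 1` and
`a n = ∑_{k=0}^{n-1} C(n-1, k)² ⬝ a k` for `n ≥ 1`. -/
theorem sum_sq_standard_immaculate_eq_a
    (a : ℕ → ℕ) (ha0 : a 0 = 1)
    (harec : ∀ n : ℕ, 0 < n →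
      a n = ∑ k ∈ Finset.range n, (Nat.choose (n - 1) k) ^ 2 * a k) :
    ∀ n : ℕ, 0 < n → ∑ α : Composition n, (g α) ^ 2 = a n := by
  intro n _
  exact G_eq a ha0 harec n
end

section
/- Fix a positive integer n and an integer k with 0 ≤ k ≤ n. The sum of (g^α)^2 over all integer compositions α of n+1 whose first part equals n-k+1 is equal to (C(n,n-k))^2 · ∑_{β ⊨ k} (g^β)^2, where the sum over β ranges over compositions of k (interpreted as 1 when k = 0). Equivalently, the number of pairs (T_3, T_4) of standard immaculate tableaux of a common shape α ⊨ n+1 with α_1 = n-k+1 equals the number of quadruples (T_1, T_2, S_1, S_2) where T_1 and T_2 are standard immaculate tableaux of a common shape β ⊨ k and S_1, S_2 are subsets of {1, 2, …, n} each of size n-k. -/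
namespace ImmProof

/-- Prepend a block of size `m+1` to a composition of `k`. -/
def prepend (m : ℕ) {k N : ℕ} (β : Composition k) (h : m + 1 + k = N) : Composition N where
  blocks := (m + 1) :: β.blocks
  blocks_pos := by
    intro i hi
    rcases List.mem_cons.1 hi with h' | h'
    · omega
    · exact β.blocks_pos h'
  blocks_sum := by simp [β.blocks_sum]; omega

variable {m k : ℕ} (β : Composition k)

/-- Split the cells of `prepend m β rfl` into first-row cells and cells of `β`. -/
def cellsEquiv : ImmaculateCells (prepend m β rfl) ≃ (Fin (m + 1) ⊕ ImmaculateCells β) where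
  toFun c :=
    match c with
    | ⟨⟨0, _⟩, j⟩ => Sum.inl j
    | ⟨⟨i + 1, hi⟩, j⟩ => Sum.inr ⟨⟨i, Nat.lt_of_succ_lt_succ hi⟩, j⟩
  invFun s :=
    match s with
    | Sum.inl j => ⟨⟨0, Nat.succ_pos _⟩, j⟩
    | Sum.inr ⟨i, j⟩ => ⟨⟨i.1 + 1, Nat.succ_lt_succ i.2⟩, j⟩
  left_inv := by rintro ⟨⟨i | i, hi⟩, j⟩ <;> rfl
  right_inv := by rintro (j | ⟨⟨i, hi⟩, j⟩) <;> rfl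

def succE (m k : ℕ) : Fin (m + k) ↪ Fin (m + 1 + k) :=
  ⟨fun x => ⟨x.1 + 1, by omega⟩, by
    intro a b h
    simpa [Fin.ext_iff] using h⟩

def zeroF (m k : ℕ) : Fin (m + 1 + k) := ⟨0, by omega⟩

def row0 (S : Finset (Fin (m + k))) : Finset (Fin (m + 1 + k)) :=
  insert (zeroF m k) (S.map (succE m k))

lemma zero_mem_row0 (S : Finset (Fin (m + k))) : zeroF m k ∈ row0 S :=
  Finset.mem_insert_self _ _

lemma zero_not_mem_map (S : Finset (Fin (m + k))) : zeroF m k ∉ S.map (succE m k) := by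
  intro h
  obtain ⟨y, -, hy⟩ := Finset.mem_map.1 h
  exact Nat.succ_ne_zero _ (congrArg Fin.val hy)

lemma card_row0 {S : Finset (Fin (m + k))} (hS : S.card = m) : (row0 S).card = m + 1 := by
  rw [row0, Finset.card_insert_of_notMem (zero_not_mem_map S), Finset.card_map, hS]

lemma card_row0_compl {S : Finset (Fin (m + k))} (hS : S.card = m) : (row0 S)ᶜ.card = k := by
  rw [Finset.card_compl, card_row0 hS, Fintype.card_fin]
  omega


variable {m k : ℕ} {β : Composition k}

section Forward

variable (S : Finset (Fin (m + k))) (hS : S.card = m) (T' : ImmaculateCells β ≃ Fin k)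

/-- The underlying filling associated to a subset `S` and a filling `T'` of `β`. -/
def fillFun (c : ImmaculateCells (prepend m β rfl)) : Fin (m + 1 + k) :=
  Sum.elim (fun j => (row0 S).orderEmbOfFin (card_row0 hS) j)
    (fun c' => ((row0 S)ᶜ).orderEmbOfFin (card_row0_compl hS) (T' c'))
    (cellsEquiv β c)

lemma fillFun_bijective : Function.Bijective (fillFun S hS T') := by
  have hinj : Function.Injective
      (Sum.elim (fun j => (row0 S).orderEmbOfFin (card_row0 hS) j)
        (fun c' => ((row0 S)ᶜ).orderEmbOfFin (card_row0_compl hS) (T' c')) :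
        Fin (m + 1) ⊕ ImmaculateCells β → Fin (m + 1 + k)) := by
    rintro (a | a) (b | b) hab
    · simpa using ((row0 S).orderEmbOfFin (card_row0 hS)).injective hab
    · exfalso
      simp only [Sum.elim_inl, Sum.elim_inr] at hab
      have h1 := (row0 S).orderEmbOfFin_mem (card_row0 hS) a
      have h2 := ((row0 S)ᶜ).orderEmbOfFin_mem (card_row0_compl hS) (T' b)
      rw [Finset.mem_compl] at h2
      exact h2 (hab ▸ h1)
    · exfalso
      simp only [Sum.elim_inl, Sum.elim_inr] at hab
      have h1 := (row0 S).orderEmbOfFin_mem (card_row0 hS) b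
      have h2 := ((row0 S)ᶜ).orderEmbOfFin_mem (card_row0_compl hS) (T' a)
      rw [Finset.mem_compl] at h2
      exact h2 (hab ▸ h1)
    · simp only [Sum.elim_inr] at hab
      simpa using T'.injective ((((row0 S)ᶜ).orderEmbOfFin (card_row0_compl hS)).injective hab)
  constructor
  · exact hinj.comp (cellsEquiv β).injective
  · intro x
    by_cases hx : x ∈ row0 S
    · have : x ∈ Set.range ((row0 S).orderEmbOfFin (card_row0 hS)) := by
        rw [Finset.range_orderEmbOfFin]; exact hx
      obtain ⟨j, hj⟩ := this
      exact ⟨(cellsEquiv β).symm (Sum.inl j), by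
        simp [fillFun, Equiv.apply_symm_apply, hj]⟩
    · have : x ∈ Set.range (((row0 S)ᶜ).orderEmbOfFin (card_row0_compl hS)) := by
        rw [Finset.range_orderEmbOfFin]; simpa using hx
      obtain ⟨y, hy⟩ := this
      exact ⟨(cellsEquiv β).symm (Sum.inr (T'.symm y)), by
        simp [fillFun, Equiv.apply_symm_apply, hy]⟩

/-- The filling as an equivalence. -/
noncomputable def fill : ImmaculateCells (prepend m β rfl) ≃ Fin (m + 1 + k) :=
  Equiv.ofBijective _ (fillFun_bijective S hS T')

lemma fill_apply_zero (h0 : (0 : ℕ) < (prepend m β rfl).length) (j) :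
    fill S hS T' ⟨⟨0, h0⟩, j⟩ = (row0 S).orderEmbOfFin (card_row0 hS) j := rfl

lemma fill_apply_succ (i : ℕ) (hi : i + 1 < (prepend m β rfl).length) (j) :
    fill S hS T' ⟨⟨i + 1, hi⟩, j⟩ =
      ((row0 S)ᶜ).orderEmbOfFin (card_row0_compl hS)
        (T' ⟨⟨i, Nat.lt_of_succ_lt_succ hi⟩, j⟩) := rfl

end Forward

section Std

variable {S : Finset (Fin (m + k))} (hS : S.card = m) {T' : ImmaculateCells β ≃ Fin k}

lemma orderEmbOfFin_row0_zero :
    (row0 S).orderEmbOfFin (card_row0 hS) ⟨0, Nat.succ_pos m⟩ = zeroF m k := by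
  rw [Finset.orderEmbOfFin_zero (card_row0 hS) (Nat.succ_pos m)]
  refine le_antisymm (Finset.min'_le _ _ (zero_mem_row0 S)) ?_
  exact Fin.mk_le_of_le_val (Nat.zero_le _)

lemma zeroF_lt_of_mem_compl {x : Fin (m + 1 + k)} (hx : x ∈ (row0 S)ᶜ) : zeroF m k < x := by
  rw [Finset.mem_compl] at hx
  have hne : x ≠ zeroF m k := fun h => hx (h ▸ zero_mem_row0 S)
  have : zeroF m k ≤ x := Fin.mk_le_of_le_val (Nat.zero_le _)
  exact lt_of_le_of_ne this (Ne.symm hne)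

lemma fill_isStandard (hT' : IsStandardImmaculate β T') :
    IsStandardImmaculate (prepend m β rfl) (fill S hS T') := by
  constructor
  · rintro ⟨iv, hi⟩ j j' hjj
    match iv, hi with
    | 0, hi =>
      rw [fill_apply_zero, fill_apply_zero]
      exact ((row0 S).orderEmbOfFin (card_row0 hS)).strictMono hjj
    | i + 1, hi =>
      rw [fill_apply_succ, fill_apply_succ]
      exact (((row0 S)ᶜ).orderEmbOfFin (card_row0_compl hS)).strictMono
        (hT'.1 ⟨i, Nat.lt_of_succ_lt_succ hi⟩ j j' hjj)
  · rintro ⟨iv, hi⟩ ⟨iv', hi'⟩ hii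
    have hii' : iv < iv' := hii
    match iv, hi, iv', hi' with
    | _, _, 0, _ => omega
    | 0, hi, i' + 1, hi' =>
      rw [fill_apply_zero, fill_apply_succ]
      refine lt_of_eq_of_lt (orderEmbOfFin_row0_zero hS) ?_
      exact zeroF_lt_of_mem_compl
        (((row0 S)ᶜ).orderEmbOfFin_mem (card_row0_compl hS) _)
    | i + 1, hi, i' + 1, hi' =>
      rw [fill_apply_succ, fill_apply_succ]
      refine (((row0 S)ᶜ).orderEmbOfFin (card_row0_compl hS)).strictMono ?_
      exact hT'.2 ⟨i, Nat.lt_of_succ_lt_succ hi⟩ ⟨i', Nat.lt_of_succ_lt_succ hi'⟩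
        (by simpa using Nat.lt_of_succ_lt_succ hii')

end Std

section Bij

/-- The forward map of the key bijection. -/
noncomputable def phi :
    ({S : Finset (Fin (m + k)) // S.card = m} ×
      {T' : ImmaculateCells β ≃ Fin k // IsStandardImmaculate β T'}) →
    {T : ImmaculateCells (prepend m β rfl) ≃ Fin (m + 1 + k) //
      IsStandardImmaculate (prepend m β rfl) T} :=
  fun p => ⟨fill p.1.1 p.1.2 p.2.1, fill_isStandard p.1.2 p.2.2⟩

lemma row0_inj {S1 S2 : Finset (Fin (m + k))} (h : row0 S1 = row0 (k := k) S2) : S1 = S2 := by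
  ext x
  have : ∀ S : Finset (Fin (m + k)), x ∈ S ↔ succE m k x ∈ row0 S := by
    intro S
    rw [row0, Finset.mem_insert]
    constructor
    · intro hx; exact Or.inr (Finset.mem_map_of_mem _ hx)
    · rintro (hx | hx)
      · exact absurd hx.symm (by simp [succE, zeroF, Fin.ext_iff])
      · exact (Finset.mem_map' _).1 hx
  rw [this S1, this S2, h]

lemma phi_injective (β : Composition k) : Function.Injective (phi (m := m) (β := β)) := by
  rintro ⟨⟨S1, hS1⟩, ⟨T1, hT1⟩⟩ ⟨⟨S2, hS2⟩, ⟨T2, hT2⟩⟩ h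
  have h' : fill S1 hS1 T1 = fill S2 hS2 T2 := congrArg Subtype.val h
  have hrow : row0 S1 = row0 (k := k) S2 := by
    have h1 : ∀ j : Fin (m + 1),
        (row0 S1).orderEmbOfFin (card_row0 hS1) j =
          (row0 S2).orderEmbOfFin (card_row0 hS2) j := by
      intro j
      have := DFunLike.congr_fun h'
        (⟨⟨0, Nat.succ_pos _⟩, j⟩ : ImmaculateCells (prepend m β rfl))
      exact this
    have hfun : ⇑((row0 S1).orderEmbOfFin (card_row0 hS1)) =
        ⇑((row0 S2).orderEmbOfFin (card_row0 hS2)) := funext h1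
    rw [← Finset.coe_inj, ← Finset.range_orderEmbOfFin _ (card_row0 hS1),
      ← Finset.range_orderEmbOfFin _ (card_row0 hS2), hfun]
  obtain rfl : S1 = S2 := row0_inj hrow
  obtain rfl : hS1 = hS2 := rfl
  have hTT : T1 = T2 := by
    apply Equiv.ext
    rintro ⟨⟨i, hi⟩, j⟩
    have := DFunLike.congr_fun h'
      (⟨⟨i + 1, Nat.succ_lt_succ hi⟩, j⟩ : ImmaculateCells (prepend m β rfl))
    replace this : ((row0 S1)ᶜ).orderEmbOfFin (card_row0_compl hS1) (T1 ⟨⟨i, hi⟩, j⟩) =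
        ((row0 S1)ᶜ).orderEmbOfFin (card_row0_compl hS1) (T2 ⟨⟨i, hi⟩, j⟩) := this
    exact (((row0 S1)ᶜ).orderEmbOfFin (card_row0_compl hS1)).injective this
  simp [hTT]

end Bij

section Surj

variable (β : Composition k)

/-- The inclusion of cells of `β` into cells of `prepend m β rfl`. -/
def inrCell (c : ImmaculateCells β) : ImmaculateCells (prepend m β rfl) :=
  (cellsEquiv β).symm (Sum.inr c)

lemma inrCell_def (c : ImmaculateCells β) :
    inrCell (m := m) β c = ⟨⟨c.1.1 + 1, Nat.succ_lt_succ c.1.2⟩, c.2⟩ := rfl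

lemma phi_surjective : Function.Surjective (phi (m := m) (β := β)) := by
  rintro ⟨T, hT⟩
  have h0 : 0 < (prepend m β rfl).length := Nat.succ_pos _
  -- the first entry of a standard tableau is `0`
  have hT00 : T ⟨⟨0, h0⟩, ⟨0, (prepend m β rfl).one_le_blocksFun ⟨0, h0⟩⟩⟩ = zeroF m k := by
    obtain ⟨⟨⟨iv, hi⟩, ⟨jv, hj⟩⟩, hc⟩ := T.surjective (zeroF m k)
    match iv, jv, hi, hj, hc with
    | iv, jv + 1, hi, hj, hc =>
      exfalso
      have hlt := hT.1 ⟨iv, hi⟩ ⟨0, (prepend m β rfl).one_le_blocksFun ⟨iv, hi⟩⟩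
        ⟨jv + 1, hj⟩ (Fin.mk_lt_mk.2 (Nat.succ_pos jv))
      rw [hc] at hlt
      simp [zeroF, Fin.lt_def] at hlt
    | iv + 1, 0, hi, hj, hc =>
      exfalso
      have hlt := hT.2 ⟨0, h0⟩ ⟨iv + 1, hi⟩ (Fin.mk_lt_mk.2 (Nat.succ_pos iv))
      have hc' : T ⟨⟨iv + 1, hi⟩,
          ⟨0, (prepend m β rfl).one_le_blocksFun ⟨iv + 1, hi⟩⟩⟩ = zeroF m k := hc
      rw [hc'] at hlt
      simp [zeroF, Fin.lt_def] at hlt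
    | 0, 0, hi, hj, hc => exact hc
  -- the first row of `T`
  set f : Fin (m + 1) → Fin (m + 1 + k) := fun j => T ⟨⟨0, h0⟩, j⟩ with hfdef
  have hfmono : StrictMono f := fun a b hab => hT.1 ⟨0, h0⟩ a b hab
  set R : Finset (Fin (m + 1 + k)) := Finset.image f Finset.univ with hRdef
  have hRcard : R.card = m + 1 := by
    rw [hRdef, Finset.card_image_of_injective _ hfmono.injective, Finset.card_univ,
      Fintype.card_fin]
  set S : Finset (Fin (m + k)) := Finset.univ.filter (fun x => succE m k x ∈ R) with hSdef
  have hrow : row0 S = R := by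
    ext x
    constructor
    · intro hx
      rcases Finset.mem_insert.1 hx with hx | hx
      · subst hx
        exact hT00 ▸ Finset.mem_image_of_mem f (Finset.mem_univ _)
      · obtain ⟨y, hy, rfl⟩ := Finset.mem_map.1 hx
        exact (Finset.mem_filter.1 hy).2
    · intro hx
      by_cases hz : x = zeroF m k
      · rw [hz]; exact zero_mem_row0 S
      · have hxne : x.1 ≠ 0 := fun h => hz (Fin.ext h)
        have hxlt : x.1 - 1 < m + k := by omega
        have hsucc : succE m k ⟨x.1 - 1, hxlt⟩ = x := by
          simp only [succE, Function.Embedding.coeFn_mk]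
          exact Fin.ext (by show x.1 - 1 + 1 = x.1; omega)
        refine Finset.mem_insert_of_mem (Finset.mem_map.2 ⟨⟨x.1 - 1, hxlt⟩, ?_, hsucc⟩)
        exact Finset.mem_filter.2 ⟨Finset.mem_univ _, by rw [hsucc]; exact hx⟩
  have hScard : S.card = m := by
    have h1 : (row0 S).card = R.card := by rw [hrow]
    rw [row0, Finset.card_insert_of_notMem (zero_not_mem_map S), Finset.card_map,
      hRcard] at h1
    omega
  -- the first row coincides with the canonical parametrization of `row0 S`
  have he1 : f = ⇑((row0 S).orderEmbOfFin (card_row0 hScard)) :=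
    Finset.orderEmbOfFin_unique _
      (fun x => by rw [hrow]; exact Finset.mem_image_of_mem f (Finset.mem_univ x)) hfmono
  -- the remaining entries
  have hmem : ∀ c : ImmaculateCells β, T (inrCell β c) ∈ (row0 S)ᶜ := by
    intro c
    rw [Finset.mem_compl, hrow]
    intro hmem'
    obtain ⟨j, -, hj⟩ := Finset.mem_image.1 hmem'
    have h2 := T.injective hj
    rw [inrCell_def] at h2
    simpa using congrArg (fun z => z.1.1) h2
  set iso := ((row0 S)ᶜ).orderIsoOfFin (card_row0_compl hScard) with hisodef
  set T'f : ImmaculateCells β → Fin k :=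
    fun c => iso.symm ⟨T (inrCell β c), hmem c⟩ with hT'fdef
  have hT'bij : Function.Bijective T'f := by
    constructor
    · intro a b hab
      have h1 := iso.symm.injective hab
      have h2 : T (inrCell β a) = T (inrCell β b) := congrArg Subtype.val h1
      have h3 := T.injective h2
      have h4 := (cellsEquiv β).symm.injective h3
      exact Sum.inr_injective h4
    · intro y
      obtain ⟨c, hc⟩ := T.surjective (iso y).1
      have hcmem : ((iso y : Fin (m + 1 + k))) ∉ row0 S := Finset.mem_compl.1 (iso y).2
      have hc2 : c = (cellsEquiv β).symm (cellsEquiv β c) := ((cellsEquiv β).symm_apply_apply c).symm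
      rcases hs : cellsEquiv β c with j | c'
      · exfalso
        apply hcmem
        rw [← hc, hrow, hc2, hs]
        exact Finset.mem_image_of_mem f (Finset.mem_univ j)
      · refine ⟨c', ?_⟩
        have : T (inrCell β c') = (iso y).1 := by rw [inrCell, ← hs, ← hc2, hc]
        rw [hT'fdef]
        simp only
        rw [show (⟨T (inrCell β c'), hmem c'⟩ : {x // x ∈ (row0 S)ᶜ}) = iso y from
          Subtype.ext this]
        exact iso.symm_apply_apply y
  set T' : ImmaculateCells β ≃ Fin k := Equiv.ofBijective T'f hT'bij with hT'def
  have hT'lt : ∀ c c' : ImmaculateCells β,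
      T' c < T' c' ↔ T (inrCell β c) < T (inrCell β c') := by
    intro c c'
    show T'f c < T'f c' ↔ _
    rw [hT'fdef]
    simp only
    rw [iso.symm.lt_iff_lt, Subtype.mk_lt_mk]
  have hT'std : IsStandardImmaculate β T' := by
    constructor
    · intro i j j' hjj
      rw [hT'lt]
      exact hT.1 ⟨i.1 + 1, Nat.succ_lt_succ i.2⟩ j j' hjj
    · intro i i' hii
      rw [hT'lt]
      exact hT.2 ⟨i.1 + 1, Nat.succ_lt_succ i.2⟩ ⟨i'.1 + 1, Nat.succ_lt_succ i'.2⟩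
        (Fin.mk_lt_mk.2 (Nat.succ_lt_succ hii))
  refine ⟨⟨⟨S, hScard⟩, ⟨T', hT'std⟩⟩, ?_⟩
  apply Subtype.ext
  apply Equiv.ext
  rintro ⟨⟨iv | iv, hi⟩, j⟩
  · show fill S hScard T' ⟨⟨0, hi⟩, j⟩ = _
    rw [fill_apply_zero]
    exact (congrFun he1 j).symm
  · show fill S hScard T' ⟨⟨iv + 1, hi⟩, j⟩ = _
    rw [fill_apply_succ]
    have hc : (⟨⟨iv, Nat.lt_of_succ_lt_succ hi⟩, j⟩ : ImmaculateCells β) =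
        ⟨⟨iv, Nat.lt_of_succ_lt_succ hi⟩, j⟩ := rfl
    show ((row0 S)ᶜ).orderEmbOfFin (card_row0_compl hScard)
        (T'f ⟨⟨iv, Nat.lt_of_succ_lt_succ hi⟩, j⟩) = _
    rw [hT'fdef]
    simp only
    rw [← Finset.coe_orderIsoOfFin_apply, ← hisodef, OrderIso.apply_symm_apply]
    rfl

end Surj

lemma g_prepend {k N : ℕ} (m : ℕ) (β : Composition k) (h : m + 1 + k = N) :
    g (prepend m β h) = Nat.choose (m + k) m * g β := by
  subst h
  calc g (prepend m β rfl)
      = Nat.card ({S : Finset (Fin (m + k)) // S.card = m} ×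
          {T' : ImmaculateCells β ≃ Fin k // IsStandardImmaculate β T'}) :=
        Nat.card_congr (Equiv.ofBijective _ ⟨phi_injective β, phi_surjective β⟩).symm
    _ = Nat.card {S : Finset (Fin (m + k)) // S.card = m} *
          Nat.card {T' : ImmaculateCells β ≃ Fin k // IsStandardImmaculate β T'} :=
        Nat.card_prod _ _
    _ = Nat.choose (m + k) m * g β := by
        rw [Nat.card_eq_fintype_card, Fintype.card_finset_len, Fintype.card_fin]
        rfl

/-- The tail of a composition, as a composition. -/
def tailC {N : ℕ} (k : ℕ) (α : Composition N) (h : α.blocks.headI + k = N) : Composition k where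
  blocks := α.blocks.tail
  blocks_pos := fun hi => α.blocks_pos (List.mem_of_mem_tail hi)
  blocks_sum := by
    have hs := α.blocks_sum
    rcases hb : α.blocks with _ | ⟨a, l⟩
    · rw [hb] at hs h
      simp at hs h ⊢
      omega
    · rw [hb] at hs h
      simp at hs h ⊢
      omega

end ImmProof

/-- For `0 ≤ k ≤ n`, the sum of `(g^α)²` over compositions `α ⊨ n+1` whose first part is
`n - k + 1` equals `C(n, n-k)² ⬝ ∑_{β ⊨ k} (g^β)²` (the sum over `β` being `1` when `k = 0`,
coming from the empty composition and the empty tableau). -/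


theorem sum_sq_standard_immaculate_first_part (n k : ℕ) (hn : 0 < n) (hk : k ≤ n) :
    ∑ α ∈ Finset.univ.filter
        (fun α : Composition (n + 1) => α.blocks.headI = n - k + 1), (g α) ^ 2 =
      (Nat.choose n (n - k)) ^ 2 * ∑ β : Composition k, (g β) ^ 2 := by
  have hN : (n - k) + 1 + k = n + 1 := by omega
  have key : ∀ β : Composition k,
      g (ImmProof.prepend (n - k) β hN) = Nat.choose n (n - k) * g β := by
    intro β
    rw [ImmProof.g_prepend]
    congr 2
    omega
  rw [Finset.mul_sum]
  refine Finset.sum_bij'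
    (i := fun α hα => ImmProof.tailC k α (by
      have := (Finset.mem_filter.1 hα).2
      omega))
    (j := fun β _ => ImmProof.prepend (n - k) β hN)
    (fun α hα => Finset.mem_univ _)
    (fun β hβ => Finset.mem_filter.2 ⟨Finset.mem_univ _, rfl⟩)
    ?_ ?_ ?_
  · -- left inverse
    intro α hα
    have hα' := (Finset.mem_filter.1 hα).2
    apply Composition.ext
    show (n - k + 1) :: α.blocks.tail = α.blocks
    rcases hb : α.blocks with _ | ⟨a, l⟩
    · exfalso
      have := α.blocks_sum
      rw [hb] at this
      simp at this
    · rw [hb] at hα'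
      simp at hα'
      simp [hα']
  · -- right inverse
    intro β hβ
    apply Composition.ext
    rfl
  · -- values
    intro α hα
    have hα' := (Finset.mem_filter.1 hα).2
    have hl : ImmProof.prepend (n - k)
        (ImmProof.tailC k α (by omega)) hN = α := by
      apply Composition.ext
      show (n - k + 1) :: α.blocks.tail = α.blocks
      rcases hb : α.blocks with _ | ⟨a, l⟩
      · exfalso
        have := α.blocks_sum
        rw [hb] at this
        simp at this
      · rw [hb] at hα'
        simp at hα'
        simp [hα']
    conv_lhs => rw [← hl]
    rw [key, mul_pow]
end

section
/- For every positive integer n, the number of immacutations of order n+1 equals ∑_{k=0}^{n} (C(n, n-k))^2 · (number of immacutations of order k), where the number of immacutations of order 0 is interpreted as 1. -/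
/-- An immacutation of order `n`: its class `cls` is a strictly decreasing list of
nonnegative integers ending in `0` with largest part at most `n - 1`, and `sets` records
the pairs `(t_{2i-1}, t_{2i})` of subsets: the pair indexed by `i` (zero-based) consists of
subsets of `{1, …, (n :: cls)_i - 1}` of size `(n :: cls)_i - 1 - cls_i`. -/
structure Immacutation (n : ℕ) where
  cls : List ℕ
  sets : List (Finset ℕ × Finset ℕ)
  cls_ne : cls ≠ []
  cls_sorted : cls.Pairwise (· > ·)
  cls_last : cls.getLast cls_ne = 0
  cls_head : cls.head cls_ne ≤ n - 1
  len_eq : sets.length = cls.length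
  subset_fst : ∀ i < cls.length,
    (sets.getD i (∅, ∅)).1 ⊆ Finset.Icc 1 ((n :: cls).getD i 0 - 1)
  subset_snd : ∀ i < cls.length,
    (sets.getD i (∅, ∅)).2 ⊆ Finset.Icc 1 ((n :: cls).getD i 0 - 1)
  card_fst : ∀ i < cls.length,
    (sets.getD i (∅, ∅)).1.card = (n :: cls).getD i 0 - 1 - cls.getD i 0
  card_snd : ∀ i < cls.length,
    (sets.getD i (∅, ∅)).2.card = (n :: cls).getD i 0 - 1 - cls.getD i 0

namespace ImmAux

theorem imm_ext {n : ℕ} {t s : Immacutation n} (h1 : t.cls = s.cls)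
    (h2 : t.sets = s.sets) : t = s := by
  cases t; cases s
  dsimp at h1 h2
  subst h1; subst h2
  rfl

theorem le_head_of_mem {l : List ℕ} (hl : l.Pairwise (· > ·)) (hne : l ≠ []) {x : ℕ}
    (hx : x ∈ l) : x ≤ l.head hne := by
  cases l with
  | nil => exact absurd rfl hne
  | cons a l =>
    rcases List.mem_cons.mp hx with h | h
    · simp [h]
    · exact le_of_lt ((List.pairwise_cons.mp hl).1 x h)

/-- the finset of admissible pairs of subsets -/
def GP (n k : ℕ) : Finset (Finset ℕ × Finset ℕ) :=
  (Finset.Icc 1 n).powersetCard (n - k) ×ˢ (Finset.Icc 1 n).powersetCard (n - k)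

theorem mem_GP {n k : ℕ} {p : Finset ℕ × Finset ℕ} :
    p ∈ GP n k ↔ (p.1 ⊆ Finset.Icc 1 n ∧ p.2 ⊆ Finset.Icc 1 n ∧
      p.1.card = n - k ∧ p.2.card = n - k) := by
  simp only [GP, Finset.mem_product, Finset.mem_powersetCard]
  tauto

/-- the unique immacutation of order 0 -/
def imm0 : Immacutation 0 where
  cls := [0]
  sets := [(∅, ∅)]
  cls_ne := by simp
  cls_sorted := by simp
  cls_last := rfl
  cls_head := by simp
  len_eq := rfl
  subset_fst := by
    intro i hi
    obtain rfl : i = 0 := by simpa using hi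
    simp
  subset_snd := by
    intro i hi
    obtain rfl : i = 0 := by simpa using hi
    simp
  card_fst := by
    intro i hi
    obtain rfl : i = 0 := by simpa using hi
    simp
  card_snd := by
    intro i hi
    obtain rfl : i = 0 := by simpa using hi
    simp

theorem imm0_spec (t : Immacutation 0) : t.cls = [0] ∧ t.sets = [(∅, ∅)] := by
  obtain ⟨cls, sets, cne, csort, clast, chead, lene, sf1, sf2, cf1, cf2⟩ := t
  dsimp only at *
  cases cls with
  | nil => exact absurd rfl cne
  | cons c cs =>
  cases cs with
  | cons c1 cs' =>
    exfalso
    have h1 := (List.pairwise_cons.mp csort).1 c1 (by simp)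
    have h2 : c ≤ 0 - 1 := chead
    omega
  | nil =>
  have hc0 : c = 0 := by simpa using clast
  subst hc0
  cases sets with
  | nil => simp at lene
  | cons q qs =>
  cases qs with
  | cons r rs => simp at lene
  | nil =>
  refine ⟨rfl, ?_⟩
  have h1 := sf1 0 (by simp)
  have h2 := sf2 0 (by simp)
  simp only [List.getD_cons_zero, Nat.zero_sub, Nat.sub_self] at h1 h2
  have e1 : q.1 = ∅ := Finset.subset_empty.mp (by simpa using h1)
  have e2 : q.2 = ∅ := Finset.subset_empty.mp (by simpa using h2)
  rw [show q = (q.1, q.2) from rfl, e1, e2]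

instance : Subsingleton (Immacutation 0) :=
  ⟨fun a b => imm_ext ((imm0_spec a).1.trans (imm0_spec b).1.symm)
    ((imm0_spec a).2.trans (imm0_spec b).2.symm)⟩

instance : Unique (Immacutation 0) := ⟨⟨imm0⟩, fun a => Subsingleton.elim a imm0⟩

/-- build an immacutation of order n+1 with class `[0]` -/
def mk0 (n : ℕ) (p : Finset ℕ × Finset ℕ) (hp : p ∈ GP n 0) : Immacutation (n + 1) where
  cls := [0]
  sets := [p]
  cls_ne := by simp
  cls_sorted := by simp
  cls_last := rfl
  cls_head := by simp
  len_eq := rfl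
  subset_fst := by
    intro i hi
    obtain rfl : i = 0 := by simpa using hi
    simpa using (mem_GP.mp hp).1
  subset_snd := by
    intro i hi
    obtain rfl : i = 0 := by simpa using hi
    simpa using (mem_GP.mp hp).2.1
  card_fst := by
    intro i hi
    obtain rfl : i = 0 := by simpa using hi
    simpa using (mem_GP.mp hp).2.2.1
  card_snd := by
    intro i hi
    obtain rfl : i = 0 := by simpa using hi
    simpa using (mem_GP.mp hp).2.2.2

/-- build an immacutation of order n+1 with first part `k ≥ 1` from one of order `k` -/
def mkS (n k : ℕ) (hk0 : 0 < k) (hk : k ≤ n) (p : Finset ℕ × Finset ℕ)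
    (hp : p ∈ GP n k) (r : Immacutation k) : Immacutation (n + 1) where
  cls := k :: r.cls
  sets := p :: r.sets
  cls_ne := by simp
  cls_sorted := by
    refine List.pairwise_cons.mpr ⟨fun b hb => ?_, r.cls_sorted⟩
    have h1 : b ≤ r.cls.head r.cls_ne := le_head_of_mem r.cls_sorted r.cls_ne hb
    have h2 := r.cls_head
    omega
  cls_last := by rw [List.getLast_cons r.cls_ne]; exact r.cls_last
  cls_head := by simpa using hk
  len_eq := by simpa using r.len_eq
  subset_fst := by
    intro i hi
    match i with
    | 0 => simpa using (mem_GP.mp hp).1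
    | (i + 1) =>
      have := r.subset_fst i (by simpa using hi)
      simpa using this
  subset_snd := by
    intro i hi
    match i with
    | 0 => simpa using (mem_GP.mp hp).2.1
    | (i + 1) =>
      have := r.subset_snd i (by simpa using hi)
      simpa using this
  card_fst := by
    intro i hi
    match i with
    | 0 =>
      have := (mem_GP.mp hp).2.2.1
      simpa using this
    | (i + 1) =>
      have := r.card_fst i (by simpa using hi)
      simpa using this
  card_snd := by
    intro i hi
    match i with
    | 0 =>
      have := (mem_GP.mp hp).2.2.2
      simpa using this
    | (i + 1) =>
      have := r.card_snd i (by simpa using hi)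
      simpa using this

/-- the decoding map -/
noncomputable def bwd (n : ℕ)
    (x : Σ k : Fin (n + 1), {p // p ∈ GP n (k : ℕ)} × Immacutation (k : ℕ)) :
    Immacutation (n + 1) :=
  if h : (x.1 : ℕ) = 0 then mk0 n x.2.1.1 (h ▸ x.2.1.2)
  else mkS n x.1 (Nat.pos_of_ne_zero h) (Nat.lt_succ_iff.mp x.1.2) x.2.1.1 x.2.1.2 x.2.2

theorem bwd_cls (n : ℕ) (x) :
    (bwd n x).cls = if (x.1 : ℕ) = 0 then [0] else (x.1 : ℕ) :: x.2.2.cls := by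
  rcases x with ⟨k, p, r⟩
  by_cases h : (k : ℕ) = 0 <;> simp [bwd, h, mk0, mkS]

theorem bwd_sets (n : ℕ) (x) : (bwd n x).sets =
    if (x.1 : ℕ) = 0 then [x.2.1.1] else x.2.1.1 :: x.2.2.sets := by
  rcases x with ⟨k, p, r⟩
  by_cases h : (k : ℕ) = 0 <;> simp [bwd, h, mk0, mkS]

theorem bwd_injective (n : ℕ) : Function.Injective (bwd n) := by
  rintro ⟨k, p, r⟩ ⟨k', p', r'⟩ h
  have hcls : (bwd n ⟨k, p, r⟩).cls = (bwd n ⟨k', p', r'⟩).cls := by rw [h]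
  have hsets : (bwd n ⟨k, p, r⟩).sets = (bwd n ⟨k', p', r'⟩).sets := by rw [h]
  rw [bwd_cls, bwd_cls] at hcls
  rw [bwd_sets, bwd_sets] at hsets
  by_cases h1 : (k : ℕ) = 0 <;> by_cases h2 : (k' : ℕ) = 0
  · have hk : k = k' := Fin.ext (by omega)
    subst hk
    simp only [h1, if_pos] at hcls hsets
    have hp : p = p' := Subtype.ext (by simpa using hsets)
    subst hp
    have hr : r = r' := by
      haveI : Subsingleton (Immacutation (k : ℕ)) := by rw [h1]; infer_instance
      exact Subsingleton.elim r r'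
    subst hr; rfl
  · simp only [h1, h2, ite_true, ite_false] at hcls
    exact absurd (List.head_eq_of_cons_eq hcls).symm h2
  · simp only [h1, h2, ite_true, ite_false] at hcls
    exact absurd (List.head_eq_of_cons_eq hcls) h1
  · simp only [h1, h2, ite_false] at hcls hsets
    have hkk : (k : ℕ) = (k' : ℕ) := List.head_eq_of_cons_eq hcls
    have hk : k = k' := Fin.ext hkk
    subst hk
    have hp : p = p' := Subtype.ext (List.head_eq_of_cons_eq hsets)
    subst hp
    have hr : r = r' :=
      imm_ext (List.tail_eq_of_cons_eq hcls) (List.tail_eq_of_cons_eq hsets)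
    subst hr; rfl

theorem bwd_surjective (n : ℕ) : Function.Surjective (bwd n) := by
  intro t
  obtain ⟨cls, sets, cne, csort, clast, chead, lene, sf1, sf2, cf1, cf2⟩ := t
  cases cls with
  | nil => exact absurd rfl cne
  | cons c cs =>
  cases sets with
  | nil => simp at lene
  | cons q qs =>
  simp only [List.length_cons, Nat.add_right_cancel_iff] at lene
  have hhead : c ≤ n := by
    have : c ≤ n + 1 - 1 := chead
    omega
  have hq1 := sf1 0 (by simp)
  have hq2 := sf2 0 (by simp)
  have hq3 := cf1 0 (by simp)
  have hq4 := cf2 0 (by simp)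
  simp only [List.getD_cons_zero, Nat.add_sub_cancel] at hq1 hq2 hq3 hq4
  have hqGP : q ∈ GP n c := mem_GP.mpr ⟨hq1, hq2, hq3, hq4⟩
  cases cs with
  | nil =>
    have hc0 : c = 0 := by simpa using clast
    subst hc0
    have hqs : qs = [] := by simpa using lene
    subst hqs
    refine ⟨⟨⟨0, by omega⟩, ⟨q, hqGP⟩, imm0⟩, ?_⟩
    apply imm_ext
    · rw [bwd_cls]; rfl
    · rw [bwd_sets]; rfl
  | cons c1 cs' =>
    have hcpos : 0 < c := by
      have := (List.pairwise_cons.mp csort).1 c1 (by simp)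
      omega
    have hlast' : (c1 :: cs').getLast (by simp) = 0 := by
      rwa [List.getLast_cons (by simp)] at clast
    refine ⟨⟨⟨c, by omega⟩, ⟨q, hqGP⟩,
      { cls := c1 :: cs'
        sets := qs
        cls_ne := by simp
        cls_sorted := (List.pairwise_cons.mp csort).2
        cls_last := hlast'
        cls_head := by
          have := (List.pairwise_cons.mp csort).1 c1 (by simp)
          show c1 ≤ c - 1
          omega
        len_eq := lene
        subset_fst := by
          intro i hi
          have := sf1 (i + 1) (by simpa using hi)
          simpa using this
        subset_snd := by
          intro i hi
          have := sf2 (i + 1) (by simpa using hi)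
          simpa using this
        card_fst := by
          intro i hi
          have := cf1 (i + 1) (by simpa using hi)
          simpa using this
        card_snd := by
          intro i hi
          have := cf2 (i + 1) (by simpa using hi)
          simpa using this }⟩, ?_⟩
    apply imm_ext
    · rw [bwd_cls, if_neg (show ¬(c = 0) by omega)]
    · rw [bwd_sets, if_neg (show ¬(c = 0) by omega)]

theorem finite_imm : ∀ n : ℕ, Finite (Immacutation n) := by
  intro n
  induction n using Nat.strong_induction_on with
  | _ n ih =>
    match n with
    | 0 => infer_instance
    | (j + 1) =>
      haveI : ∀ k : Fin (j + 1), Finite (Immacutation (k : ℕ)) :=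
        fun k => ih k (by omega)
      exact Finite.of_surjective (bwd j) (bwd_surjective j)

end ImmAux

/-- For every positive integer `n`, the number of immacutations of order `n+1` equals
`∑_{k=0}^{n} C(n, n-k)² ⬝ (number of immacutations of order k)`, where the number of
immacutations of order `0` is interpreted as `1`. -/
theorem card_immacutation_succ_recurrence
    (m : ℕ → ℕ) (hm0 : m 0 = 1)
    (hm : ∀ k : ℕ, 0 < k → m k = Nat.card (Immacutation k)) :
    ∀ n : ℕ, 0 < n →
      Nat.card (Immacutation (n + 1)) =
        ∑ k ∈ Finset.range (n + 1), (Nat.choose n (n - k)) ^ 2 * m k := by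
  intro n _
  classical
  haveI : ∀ k : ℕ, Finite (Immacutation k) := ImmAux.finite_imm
  haveI : ∀ k : ℕ, Fintype (Immacutation k) := fun k => Fintype.ofFinite _
  have h1 : Nat.card (Immacutation (n + 1)) =
      Nat.card (Σ k : Fin (n + 1), {p // p ∈ ImmAux.GP n (k : ℕ)} × Immacutation (k : ℕ)) :=
    (Nat.card_eq_of_bijective _ ⟨ImmAux.bwd_injective n, ImmAux.bwd_surjective n⟩).symm
  rw [h1, Nat.card_eq_fintype_card, Fintype.card_sigma]
  rw [Finset.sum_range fun k => (Nat.choose n (n - k)) ^ 2 * m k]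
  apply Finset.sum_congr rfl
  intro k _
  rw [Fintype.card_prod]
  have hGP : Fintype.card {p // p ∈ ImmAux.GP n (k : ℕ)} = (Nat.choose n (n - k)) ^ 2 := by
    rw [Fintype.card_coe, ImmAux.GP, Finset.card_product, Finset.card_powersetCard,
      Nat.card_Icc]
    simp [sq]
  rw [hGP]
  congr 1
  rcases Nat.eq_zero_or_pos (k : ℕ) with hk | hk
  · rw [hk, hm0]
    rw [← Nat.card_eq_fintype_card]
    simp [Nat.card_unique]
  · rw [hm k hk, Nat.card_eq_fintype_card]
end

section
/- For every positive integer n, the number of immacutations of order n equals ∑_{α ⊨ n} (g^α)^2, the sum over all integer compositions α of n of the square of the number of standard immaculate tableaux of shape α. In other words, there is a bijection between the set of pairs of standard immaculate tableaux of a common composition shape α ⊨ n and the set of immacutations of order n. -/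
open Finset

lemma mem_foldr_union {x : ℕ} {L : List (Finset ℕ)} :
    x ∈ L.foldr (· ∪ ·) ∅ ↔ ∃ t ∈ L, x ∈ t := by
  induction L with
  | nil => simp
  | cons a L ih => simp [ih]

lemma subset_foldr_union {t : Finset ℕ} {L : List (Finset ℕ)} (ht : t ∈ L) :
    t ⊆ L.foldr (· ∪ ·) ∅ := fun x hx => mem_foldr_union.2 ⟨t, ht, hx⟩

lemma min_eq_coe {s : Finset ℕ} {a : ℕ} (ha : a ∈ s) (h : ∀ x ∈ s, a ≤ x) :
    s.min = (a : WithTop ℕ) := by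
  have hne : s.Nonempty := ⟨a, ha⟩
  rw [← Finset.coe_min' hne]
  congr 1
  exact le_antisymm (Finset.min'_le _ _ ha) (Finset.le_min' _ _ _ h)

def IsRowSys (S : Finset ℕ) (L : List ℕ) (F : List (Finset ℕ)) : Prop :=
  F.map Finset.card = L ∧ F.Pairwise Disjoint ∧ F.foldr (· ∪ ·) ∅ = S ∧
    (F.map Finset.min).Pairwise (· < ·)

def prodP : ℕ → List ℕ → ℕ
  | _, [] => 1
  | m, a :: L => (m - 1).choose (a - 1) * prodP (m - a) L

lemma isRowSys_cons_iff (S : Finset ℕ) (hSne : S.Nonempty) (a : ℕ) (ha : 0 < a)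
    (L : List ℕ) (hL : ∀ b ∈ L, 0 < b) (F₀ : Finset ℕ) (F' : List (Finset ℕ)) :
    IsRowSys S (a :: L) (F₀ :: F') ↔
      S.min' hSne ∈ F₀ ∧ F₀ ⊆ S ∧ F₀.card = a ∧ IsRowSys (S \ F₀) L F' := by
  constructor
  · rintro ⟨h1, h2, h3, h4⟩
    rw [List.map_cons] at h1
    injection h1 with e1 e2
    rw [List.foldr_cons] at h3
    have hF₀ne : F₀.Nonempty := Finset.card_pos.1 (by omega)
    have hsub : F₀ ⊆ S := by
      rw [← h3]; exact Finset.subset_union_left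
    rw [List.map_cons, List.pairwise_cons] at h4
    have hle : ∀ x ∈ S, F₀.min' hF₀ne ≤ x := by
      intro x hx
      rw [← h3] at hx
      rcases Finset.mem_union.1 hx with h | h
      · exact Finset.min'_le _ _ h
      · obtain ⟨t, ht, hxt⟩ := mem_foldr_union.1 h
        have h5 : F₀.min < t.min := h4.1 _ (List.mem_map_of_mem ht)
        have h6 : t.min ≤ (x : WithTop ℕ) := Finset.min_le hxt
        have h8 : F₀.min < (x : WithTop ℕ) := lt_of_lt_of_le h5 h6
        rw [← Finset.coe_min' hF₀ne] at h8
        exact le_of_lt (WithTop.coe_lt_coe.1 h8)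
    have hmin : F₀.min' hF₀ne = S.min' hSne :=
      le_antisymm (hle _ (S.min'_mem hSne)) (S.min'_le _ (hsub (F₀.min'_mem hF₀ne)))
    have hmem : S.min' hSne ∈ F₀ := hmin ▸ F₀.min'_mem hF₀ne
    rw [List.pairwise_cons] at h2
    refine ⟨hmem, hsub, e1, e2, h2.2, ?_, h4.2⟩
    ext x
    simp only [Finset.mem_sdiff, mem_foldr_union]
    constructor
    · rintro ⟨t, ht, hxt⟩
      refine ⟨(subset_foldr_union ht).trans (by rw [← h3]; exact Finset.subset_union_right) hxt, ?_⟩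
      exact fun hxF₀ => Finset.disjoint_left.1 (h2.1 t ht) hxF₀ hxt
    · rintro ⟨hxS, hxF₀⟩
      rw [← h3] at hxS
      rcases Finset.mem_union.1 hxS with h | h
      · exact absurd h hxF₀
      · exact mem_foldr_union.1 h
  · rintro ⟨hmem, hsub, hcard, h1', h2', h3', h4'⟩
    have hrow : ∀ t ∈ F', t ⊆ S \ F₀ := fun t ht => h3' ▸ subset_foldr_union ht
    refine ⟨by rw [List.map_cons, hcard, h1'], ?_, ?_, ?_⟩
    · rw [List.pairwise_cons]
      refine ⟨fun t ht => ?_, h2'⟩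
      rw [Finset.disjoint_left]
      intro x hxF₀ hxt
      exact (Finset.mem_sdiff.1 (hrow t ht hxt)).2 hxF₀
    · rw [List.foldr_cons, h3', Finset.union_sdiff_of_subset hsub]
    · rw [List.map_cons, List.pairwise_cons]
      refine ⟨?_, h4'⟩
      intro y hy
      obtain ⟨t, ht, rfl⟩ := List.mem_map.1 hy
      have htne : t.Nonempty := by
        refine Finset.card_pos.1 ?_
        have : t.card ∈ L := h1' ▸ List.mem_map_of_mem ht
        exact hL _ this
      have htmin : t.min' htne ∈ S \ F₀ := hrow t ht (t.min'_mem htne)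
      have hm : S.min' hSne < t.min' htne := by
        rcases lt_or_eq_of_le (S.min'_le _ (Finset.mem_sdiff.1 htmin).1) with h | h
        · exact h
        · exact absurd (h ▸ hmem) (Finset.mem_sdiff.1 htmin).2
      calc F₀.min ≤ (S.min' hSne : WithTop ℕ) := Finset.min_le hmem
        _ < (t.min' htne : WithTop ℕ) := WithTop.coe_lt_coe.2 hm
        _ = t.min := Finset.coe_min' htne
instance rowSysFinite (S : Finset ℕ) (L : List ℕ) : Finite {F // IsRowSys S L F} := by
  have hlen : ∀ F : {F // IsRowSys S L F}, F.1.length = L.length := by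
    rintro ⟨F, h1, -, -, -⟩
    simp only [← h1, List.length_map]
  refine Finite.of_injective
    (fun F => fun i : Fin L.length => (⟨F.1.getD i ∅, ?_⟩ : {s // s ∈ S.powerset})) ?_
  · rw [Finset.mem_powerset]
    rcases Nat.lt_or_ge (i : ℕ) F.1.length with h | h
    · rw [List.getD_eq_getElem F.1 ∅ h]
      have hm : F.1[(i:ℕ)] ∈ F.1 := List.getElem_mem h
      have := subset_foldr_union hm
      rwa [F.2.2.2.1] at this
    · rw [List.getD_eq_default F.1 ∅ h]
      exact Finset.empty_subset S
  · intro F G h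
    apply Subtype.ext
    apply List.ext_getElem (by rw [hlen F, hlen G])
    intro i h1 h2
    have := congrFun h ⟨i, by rw [← hlen F]; exact h1⟩
    have := congrArg Subtype.val this
    dsimp only at this
    rwa [List.getD_eq_getElem F.1 ∅ h1, List.getD_eq_getElem G.1 ∅ h2] at this
lemma nat_card_sigma {ι : Type*} [Fintype ι] (B : ι → Type*) [∀ i, Finite (B i)] :
    Nat.card (Σ i, B i) = ∑ i, Nat.card (B i) := by
  letI : ∀ i, Fintype (B i) := fun i => Fintype.ofFinite _
  rw [Nat.card_eq_fintype_card, Fintype.card_sigma]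
  exact Finset.sum_congr rfl fun i _ => (Nat.card_eq_fintype_card).symm

noncomputable instance subsetsFintype (t : Finset ℕ) (k : ℕ) :
    Fintype {s : Finset ℕ // s ⊆ t ∧ s.card = k} :=
  Fintype.ofEquiv {s // s ∈ t.powersetCard k}
    (Equiv.subtypeEquivRight fun s => Finset.mem_powersetCard)

lemma card_subsets (t : Finset ℕ) (k : ℕ) :
    Nat.card {s : Finset ℕ // s ⊆ t ∧ s.card = k} = t.card.choose k := by
  rw [Nat.card_congr (Equiv.subtypeEquivRight fun s => Finset.mem_powersetCard).symm]
  rw [Nat.card_eq_fintype_card, Fintype.card_coe, Finset.card_powersetCard]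

theorem card_rowSys : ∀ (L : List ℕ), (∀ a ∈ L, 0 < a) → ∀ S : Finset ℕ, S.card = L.sum →
    Nat.card {F // IsRowSys S L F} = prodP S.card L := by
  intro L
  induction L with
  | nil =>
    intro _ S hS
    have hS0 : S = ∅ := Finset.card_eq_zero.1 (by simpa using hS)
    subst hS0
    have hU : ∀ F : {F // IsRowSys ∅ [] F}, F = ⟨[], by simp [IsRowSys]⟩ := by
      rintro ⟨F, h1, -, -, -⟩
      have : F = [] := by simpa using congrArg List.length h1
      exact Subtype.ext this
    have : Subsingleton {F // IsRowSys ∅ [] F} := ⟨fun a b => (hU a).trans (hU b).symm⟩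
    have : Nonempty {F // IsRowSys ∅ [] F} := ⟨⟨[], by simp [IsRowSys]⟩⟩
    simp [prodP, Nat.card_unique]
  | cons a L ih =>
    intro hL S hS
    rw [List.sum_cons] at hS
    have ha : 0 < a := hL a List.mem_cons_self
    have hL' : ∀ b ∈ L, 0 < b := fun b hb => hL b (List.mem_cons_of_mem _ hb)
    have hSne : S.Nonempty := Finset.card_pos.1 (by omega)
    set m := S.min' hSne with hm
    -- the bijection
    set f : (Σ A : {A : Finset ℕ // A ⊆ S.erase m ∧ A.card = a - 1},
        {F' // IsRowSys (S \ insert m A.1) L F'}) → {F // IsRowSys S (a :: L) F} :=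
      fun p => ⟨insert m p.1.1 :: p.2.1, by
        have hmA : m ∉ p.1.1 := fun h => Finset.notMem_erase m S (p.1.2.1 h)
        refine (isRowSys_cons_iff S hSne a ha L hL' _ _).2
          ⟨Finset.mem_insert_self _ _, ?_, ?_, p.2.2⟩
        · intro x hx
          rcases Finset.mem_insert.1 hx with rfl | hx
          · exact S.min'_mem hSne
          · exact Finset.erase_subset m S (p.1.2.1 hx)
        · rw [Finset.card_insert_of_notMem hmA, p.1.2.2]; omega⟩ with hf
    have hbij : Function.Bijective f := by
      constructor
      · rintro ⟨⟨A, hA⟩, ⟨F', hF'⟩⟩ ⟨⟨B, hB⟩, ⟨G', hG'⟩⟩ h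
        have h' := congrArg Subtype.val h
        dsimp only [hf] at h'
        injection h' with e1 e2
        have hmA : m ∉ A := fun h => Finset.notMem_erase m S (hA.1 h)
        have hmB : m ∉ B := fun h => Finset.notMem_erase m S (hB.1 h)
        have hAB : A = B := by
          rw [← Finset.erase_insert hmA, ← Finset.erase_insert hmB, e1]
        subst hAB
        have : F' = G' := e2
        subst this
        rfl
      · rintro ⟨F, hF⟩
        match F, hF with
        | [], hF => simp [IsRowSys] at hF
        | F₀ :: F', hF =>
          obtain ⟨hmem, hsub, hcard, hrest⟩ := (isRowSys_cons_iff S hSne a ha L hL' _ _).1 hF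
          refine ⟨⟨⟨F₀.erase m, Finset.erase_subset_erase m hsub, ?_⟩,
            ⟨F', by rwa [Finset.insert_erase hmem]⟩⟩, ?_⟩
          · rw [Finset.card_erase_of_mem hmem, hcard]
          · exact Subtype.ext (by simp [hf]; exact Finset.insert_erase hmem)
    rw [← Nat.card_eq_of_bijective f hbij]
    rw [nat_card_sigma]
    have hterm : ∀ A : {A : Finset ℕ // A ⊆ S.erase m ∧ A.card = a - 1},
        Nat.card {F' // IsRowSys (S \ insert m A.1) L F'} = prodP (S.card - a) L := by
      intro A
      have hmA : m ∉ A.1 := fun h => Finset.notMem_erase m S (A.2.1 h)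
      have hins : insert m A.1 ⊆ S := by
        intro x hx
        rcases Finset.mem_insert.1 hx with rfl | hx
        · exact S.min'_mem hSne
        · exact Finset.erase_subset m S (A.2.1 hx)
      have hcardins : (insert m A.1).card = a := by
        rw [Finset.card_insert_of_notMem hmA, A.2.2]; omega
      have hsd : (S \ insert m A.1).card = S.card - a := by
        rw [Finset.card_sdiff_of_subset hins, hcardins]
      have := ih hL' (S \ insert m A.1) (by rw [hsd]; omega)
      rwa [hsd] at this
    rw [Finset.sum_congr rfl fun A _ => hterm A, Finset.sum_const, Finset.card_univ]
    have hidx : Fintype.card {A : Finset ℕ // A ⊆ S.erase m ∧ A.card = a - 1} =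
        (S.card - 1).choose (a - 1) := by
      rw [← Nat.card_eq_fintype_card, card_subsets,
        Finset.card_erase_of_mem (S.min'_mem hSne)]
    rw [hidx]
    show (S.card - 1).choose (a-1) * prodP (S.card - a) L = prodP S.card (a :: L)
    rfl

section SIT
variable {n : ℕ} (α : Composition n)

lemma cell_inj {T : ImmaculateCells α ≃ Fin n} {i : Fin α.length}
    {j j' : Fin (α.blocksFun i)} (h : ((T ⟨i, j⟩ : Fin n) : ℕ) = ((T ⟨i, j'⟩ : Fin n) : ℕ)) :
    j = j' := by
  have h2 := T.injective (Fin.ext h)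
  simpa using h2

def rowOf (T : ImmaculateCells α ≃ Fin n) (i : Fin α.length) : Finset ℕ :=
  Finset.image (fun j : Fin (α.blocksFun i) => ((T ⟨i, j⟩ : Fin n) : ℕ)) Finset.univ

def rowsOf (T : ImmaculateCells α ≃ Fin n) : List (Finset ℕ) :=
  List.ofFn (rowOf α T)

lemma rowOf_card (T : ImmaculateCells α ≃ Fin n) (i : Fin α.length) :
    (rowOf α T i).card = α.blocksFun i := by
  rw [rowOf, Finset.card_image_of_injective _ (fun j j' h => cell_inj α h), Finset.card_univ,
    Fintype.card_fin]

lemma rowOf_min (T : ImmaculateCells α ≃ Fin n) (hT : IsStandardImmaculate α T)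
    (i : Fin α.length) :
    (rowOf α T i).min = (((T ⟨i, ⟨0, α.one_le_blocksFun i⟩⟩ : Fin n) : ℕ) : WithTop ℕ) := by
  apply min_eq_coe
  · exact Finset.mem_image_of_mem _ (Finset.mem_univ _)
  · intro x hx
    obtain ⟨j, -, rfl⟩ := Finset.mem_image.1 hx
    rcases Nat.eq_zero_or_pos j.val with h0 | h0
    · have : j = ⟨0, α.one_le_blocksFun i⟩ := Fin.ext h0
      rw [this]
    · exact le_of_lt (hT.1 i _ j (by exact h0))

lemma rowsOf_isRowSys (T : ImmaculateCells α ≃ Fin n) (hT : IsStandardImmaculate α T) :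
    IsRowSys (Finset.range n) α.blocks (rowsOf α T) := by
  refine ⟨?_, ?_, ?_, ?_⟩
  · rw [rowsOf, List.map_ofFn]
    have : (Finset.card ∘ rowOf α T) = α.blocksFun := funext fun i => rowOf_card α T i
    rw [this, Composition.ofFn_blocksFun]
  · rw [rowsOf, List.pairwise_ofFn]
    intro i j hij
    rw [Finset.disjoint_left]
    rintro x hxi hxj
    obtain ⟨j₁, -, rfl⟩ := Finset.mem_image.1 hxi
    obtain ⟨j₂, -, he⟩ := Finset.mem_image.1 hxj
    have h2 := T.injective (Fin.ext he)
    have : j = i := congrArg Sigma.fst h2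
    omega
  · ext x
    rw [mem_foldr_union, Finset.mem_range]
    constructor
    · rintro ⟨t, ht, hxt⟩
      rw [rowsOf] at ht
      obtain ⟨i, rfl⟩ := List.mem_ofFn.1 ht
      obtain ⟨j, -, rfl⟩ := Finset.mem_image.1 hxt
      exact (T ⟨i, j⟩).isLt
    · intro hx
      refine ⟨rowOf α T (T.symm ⟨x, hx⟩).1, ?_, ?_⟩
      · rw [rowsOf]; exact List.mem_ofFn.2 ⟨_, rfl⟩
      · refine Finset.mem_image.2 ⟨(T.symm ⟨x, hx⟩).2, Finset.mem_univ _, ?_⟩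
        rw [Sigma.eta, Equiv.apply_symm_apply]
  · rw [rowsOf, List.map_ofFn]
    show List.Pairwise _ _
    rw [List.pairwise_ofFn]
    intro i j hij
    show (rowOf α T i).min < (rowOf α T j).min
    rw [rowOf_min α T hT i, rowOf_min α T hT j]
    exact_mod_cast hT.2 i j hij

theorem card_SIT :
    Nat.card {T : ImmaculateCells α ≃ Fin n // IsStandardImmaculate α T} =
      prodP n α.blocks := by
  have hbij : Function.Bijective
      (fun T : {T : ImmaculateCells α ≃ Fin n // IsStandardImmaculate α T} =>
        (⟨rowsOf α T.1, rowsOf_isRowSys α T.1 T.2⟩ :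
          {F // IsRowSys (Finset.range n) α.blocks F})) := by
    constructor
    · rintro ⟨T, hT⟩ ⟨U, hU⟩ h
      have h' : rowsOf α T = rowsOf α U := congrArg Subtype.val h
      rw [rowsOf, rowsOf, List.ofFn_inj] at h'
      apply Subtype.ext
      apply Equiv.ext
      rintro ⟨i, j⟩
      have hrow : rowOf α T i = rowOf α U i := congrFun h' i
      have hmonoT : StrictMono (fun j : Fin (α.blocksFun i) => ((T ⟨i, j⟩ : Fin n) : ℕ)) :=
        fun j j' hjj => by exact_mod_cast hT.1 i j j' hjj
      have hmonoU : StrictMono (fun j : Fin (α.blocksFun i) => ((U ⟨i, j⟩ : Fin n) : ℕ)) :=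
        fun j j' hjj => by exact_mod_cast hU.1 i j j' hjj
      have hTe := Finset.orderEmbOfFin_unique (rowOf_card α T i)
        (f := fun j => ((T ⟨i, j⟩ : Fin n) : ℕ))
        (fun j => Finset.mem_image_of_mem _ (Finset.mem_univ j)) hmonoT
      have hUe := Finset.orderEmbOfFin_unique (rowOf_card α T i)
        (f := fun j => ((U ⟨i, j⟩ : Fin n) : ℕ))
        (fun j => by rw [hrow]; exact Finset.mem_image_of_mem _ (Finset.mem_univ j)) hmonoU
      have : ((T ⟨i, j⟩ : Fin n) : ℕ) = ((U ⟨i, j⟩ : Fin n) : ℕ) := by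
        rw [congrFun hTe j, congrFun hUe j]
      exact Fin.ext this
    · rintro ⟨F, hF⟩
      obtain ⟨h1, h2, h3, h4⟩ := hF
      have hlen : F.length = α.length := by
        have := congrArg List.length h1
        simpa using this
      set s : Fin α.length → Finset ℕ :=
        fun i => F[(i : ℕ)]'(by rw [hlen]; exact i.isLt) with hs
      have hscard : ∀ i : Fin α.length, (s i).card = α.blocksFun i := by
        intro i
        have h1' := congrArg (fun l : List ℕ => l[(i : ℕ)]?) h1
        simp only [List.getElem?_map] at h1'
        rw [List.getElem?_eq_getElem (by rw [hlen]; exact i.isLt),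
          List.getElem?_eq_getElem i.isLt] at h1'
        simp only [Option.map_some] at h1'
        have := Option.some.inj h1'
        rw [hs]
        exact this
      have hssub : ∀ i, s i ⊆ Finset.range n := by
        intro i
        rw [← h3]
        exact subset_foldr_union (List.getElem_mem _)
      set u : ∀ i : Fin α.length, Fin (α.blocksFun i) ↪o ℕ :=
        fun i => (s i).orderEmbOfFin (hscard i) with hu
      have humem : ∀ i j, u i j ∈ s i := fun i j => Finset.orderEmbOfFin_mem _ _ _
      have hulow : ∀ i j, u i j < n := fun i j => Finset.mem_range.1 (hssub i (humem i j))
      set toT : ImmaculateCells α → Fin n := fun c => ⟨u c.1 c.2, hulow c.1 c.2⟩ with htoT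
      have hdisj : ∀ i j : Fin α.length, i ≠ j → Disjoint (s i) (s j) := by
        intro i j hij
        have hpw := List.pairwise_iff_getElem.1 h2
        rcases lt_or_gt_of_ne hij with h | h
        · exact hpw i j (by rw [hlen]; exact i.isLt) (by rw [hlen]; exact j.isLt) h
        · exact (hpw j i (by rw [hlen]; exact j.isLt) (by rw [hlen]; exact i.isLt) h).symm
      have hbijT : Function.Bijective toT := by
        constructor
        · rintro ⟨i, j⟩ ⟨i', j'⟩ h
          have hval : u i j = u i' j' := congrArg Fin.val h
          have hii : i = i' := by
            by_contra hne
            exact Finset.disjoint_left.1 (hdisj i i' hne) (humem i j) (hval ▸ humem i' j')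
          subst hii
          have : j = j' := (u i).injective hval
          rw [this]
        · rintro ⟨x, hx⟩
          have hxf : x ∈ F.foldr (· ∪ ·) ∅ := h3 ▸ Finset.mem_range.2 hx
          obtain ⟨t, ht, hxt⟩ := mem_foldr_union.1 hxf
          obtain ⟨k, hk, rfl⟩ := List.mem_iff_getElem.1 ht
          have hk' : k < α.length := by rw [← hlen]; exact hk
          have hxs : x ∈ s ⟨k, hk'⟩ := hxt
          have hxr : x ∈ Set.range (u ⟨k, hk'⟩) := by
            rw [Finset.range_orderEmbOfFin]
            exact_mod_cast hxs
          obtain ⟨j, hj⟩ := hxr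
          exact ⟨⟨⟨k, hk'⟩, j⟩, Fin.ext hj⟩
      set T : ImmaculateCells α ≃ Fin n := Equiv.ofBijective toT hbijT with hT
      have hTval : ∀ c : ImmaculateCells α, ((T c : Fin n) : ℕ) = u c.1 c.2 := fun c => rfl
      have hstd : IsStandardImmaculate α T := by
        constructor
        · intro i j j' hjj
          exact (u i).strictMono hjj
        · intro i i' hii
          have h0 : ∀ (k : Fin α.length), ((T ⟨k, ⟨0, α.one_le_blocksFun k⟩⟩ : Fin n) : ℕ) =
              (s k).min' (Finset.card_pos.1 (by rw [hscard k]; exact α.one_le_blocksFun k)) := by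
            intro k
            rw [hTval]
            exact Finset.orderEmbOfFin_zero (hscard k) (α.one_le_blocksFun k)
          have hne1 : (s i).Nonempty :=
            Finset.card_pos.1 (by rw [hscard i]; exact α.one_le_blocksFun i)
          have hne2 : (s i').Nonempty :=
            Finset.card_pos.1 (by rw [hscard i']; exact α.one_le_blocksFun i')
          have hpw := List.pairwise_iff_getElem.1 h4
          have hm' : (s i).min < (s i').min := by
            have hml : (List.map Finset.min F).length = α.length := by
              rw [List.length_map, hlen]
            have := hpw i i' (by rw [hml]; exact i.isLt) (by rw [hml]; exact i'.isLt) hii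
            simpa [List.getElem_map] using this
          rw [← Finset.coe_min' hne1, ← Finset.coe_min' hne2] at hm'
          show (T ⟨i, _⟩ : Fin n) < (T ⟨i', _⟩ : Fin n)
          rw [Fin.lt_iff_val_lt_val, h0 i, h0 i']
          exact_mod_cast hm'
      refine ⟨⟨T, hstd⟩, ?_⟩
      apply Subtype.ext
      show rowsOf α T = F
      rw [rowsOf]
      apply List.ext_getElem (by simp [hlen])
      intro k h1k h2k
      have hk : k < α.length := by simpa using h1k
      rw [List.getElem_ofFn]
      show rowOf α T ⟨k, by simpa using h1k⟩ = _
      ext x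
      rw [rowOf, Finset.mem_image]
      constructor
      · rintro ⟨j, -, rfl⟩
        rw [hTval]
        exact humem ⟨k, hk⟩ j
      · intro hx
        have hxs : x ∈ s ⟨k, hk⟩ := hx
        have hxr : x ∈ Set.range (u ⟨k, hk⟩) := by
          rw [Finset.range_orderEmbOfFin]; exact_mod_cast hxs
        obtain ⟨j, hj⟩ := hxr
        exact ⟨j, Finset.mem_univ _, by rw [hTval]; exact hj⟩
  rw [Nat.card_eq_of_bijective _ hbij, card_rowSys α.blocks (fun a ha => α.blocks_pos ha)
    (Finset.range n) (by rw [Finset.card_range, α.blocks_sum]), Finset.card_range]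
end SIT

lemma prodP_eq (L : List ℕ) : ∀ m, prodP m L =
    ∏ i : Fin L.length, (m - (L.take i).sum - 1).choose (L.getD i 0 - 1) := by
  induction L with
  | nil => intro m; simp [prodP]
  | cons a L ih =>
    intro m
    show (m - 1).choose (a - 1) * prodP (m - a) L =
      ∏ i : Fin (L.length + 1), (m - ((a :: L).take i).sum - 1).choose ((a :: L).getD i 0 - 1)
    rw [Fin.prod_univ_succ, ih (m - a)]
    refine congrArg₂ (· * ·) (by simp) (Finset.prod_congr rfl fun i _ => by congr 1; simp only [Fin.val_succ, List.take_succ_cons, List.sum_cons]; omega)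

def Pformula {n : ℕ} (α : Composition n) : ℕ :=
  ∏ i : Fin α.length, (n - α.sizeUpTo i - 1).choose (α.blocksFun i - 1)

lemma g_eq {n : ℕ} (α : Composition n) : g α = Pformula α := by
  rw [g, card_SIT, prodP_eq]
  apply Finset.prod_congr rfl
  intro i _
  rw [List.getD_eq_getElem _ _ i.isLt]
  rfl

def Enc {n : ℕ} (α : Composition n) : Type :=
  ∀ i : Fin α.length,
    {s : Finset ℕ // s ⊆ Finset.Icc 1 (n - α.sizeUpTo i - 1) ∧ s.card = α.blocksFun i - 1}

noncomputable instance {n : ℕ} (α : Composition n) : Fintype (Enc α) := by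
  unfold Enc; infer_instance

lemma card_Enc {n : ℕ} (α : Composition n) : Nat.card (Enc α) = Pformula α := by
  show Nat.card (∀ i : Fin α.length, _) = _
  rw [Nat.card_pi]
  exact Finset.prod_congr rfl fun i _ => by rw [card_subsets, Nat.card_Icc]; simp

section Imm
variable {n : ℕ}

lemma Immacutation.ext' {t u : Immacutation n} (h1 : t.cls = u.cls) (h2 : t.sets = u.sets) :
    t = u := by
  cases t; cases u
  cases h1; cases h2
  rfl

lemma sorted_le_head {c : List ℕ} (hne : c ≠ []) (hs : c.Pairwise (· > ·)) :
    ∀ x ∈ c, x ≤ c.head hne := by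
  cases c with
  | nil => simp at hne
  | cons a c =>
    intro x hx
    rcases List.mem_cons.1 hx with rfl | hx
    · exact le_rfl
    · exact le_of_lt ((List.pairwise_cons.1 hs).1 x hx)

lemma getLastD_eq_getLast {c : List ℕ} (hne : c ≠ []) (d : ℕ) :
    c.getLastD d = c.getLast hne := by
  cases c with
  | nil => simp at hne
  | cons x c' => rw [List.getLastD_cons, List.getLast_eq_getLastD]

lemma comp_length_pos (hn : 0 < n) (α : Composition n) : 0 < α.length := by
  rcases Nat.eq_zero_or_pos α.length with h | h
  · have hsum := α.blocks_sum
    have hb : α.blocks = [] := List.length_eq_zero_iff.1 h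
    rw [hb] at hsum
    simp at hsum
    omega
  · exact h

lemma szlt (α : Composition n) : ∀ {i j : ℕ}, i < j → j ≤ α.length →
    α.sizeUpTo i < α.sizeUpTo j := by
  intro i j hij hj
  induction j with
  | zero => omega
  | succ k ih =>
    have hk : k < α.length := by omega
    rcases Nat.lt_or_ge i k with h | h
    · exact lt_trans (ih h (by omega)) (α.sizeUpTo_strict_mono hk)
    · have : i = k := by omega
      subst this
      exact α.sizeUpTo_strict_mono hk

def clsOf (α : Composition n) : List ℕ :=
  List.ofFn (fun i : Fin α.length => n - α.sizeUpTo ((i : ℕ) + 1))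

lemma length_clsOf (α : Composition n) : (clsOf α).length = α.length := by
  simp [clsOf]

lemma clsOf_getElem (α : Composition n) (k : ℕ) (hk : k < (clsOf α).length) :
    (clsOf α)[k] = n - α.sizeUpTo (k + 1) := by
  simp [clsOf]

lemma clsOf_ne (hn : 0 < n) (α : Composition n) : clsOf α ≠ [] := by
  have := comp_length_pos hn α
  intro h
  rw [← List.length_eq_zero_iff, length_clsOf] at h
  omega

lemma clsOf_sorted (α : Composition n) : (clsOf α).Pairwise (· > ·) := by
  rw [clsOf, List.pairwise_ofFn]
  intro i j hij
  have h1 : α.sizeUpTo ((i : ℕ) + 1) < α.sizeUpTo ((j : ℕ) + 1) :=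
    szlt α (by omega) (by omega)
  have h2 : α.sizeUpTo ((j : ℕ) + 1) ≤ n := α.sizeUpTo_le _
  show n - α.sizeUpTo ((i : ℕ) + 1) > n - α.sizeUpTo ((j : ℕ) + 1)
  have h3 : 0 < α.sizeUpTo ((i : ℕ) + 1) := by
    have := szlt α (show 0 < (i : ℕ) + 1 by omega) (by omega)
    simpa [Composition.sizeUpTo_zero] using this
  omega

lemma clsOf_last (hn : 0 < n) (α : Composition n) :
    (clsOf α).getLast (clsOf_ne hn α) = 0 := by
  rw [List.getLast_eq_getElem, clsOf_getElem]
  have hlen : (clsOf α).length = α.length := length_clsOf α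
  have hpos : 0 < α.length := comp_length_pos hn α
  have : (clsOf α).length - 1 + 1 = α.length := by omega
  rw [this, α.sizeUpTo_length]
  omega

lemma clsOf_head (hn : 0 < n) (α : Composition n) :
    (clsOf α).head (clsOf_ne hn α) ≤ n - 1 := by
  rw [List.head_eq_getElem_zero, clsOf_getElem]
  have hpos : 0 < α.length := comp_length_pos hn α
  have : 0 < α.sizeUpTo (0 + 1) := by
    have := szlt α (show (0:ℕ) < 1 by omega) (by omega)
    simpa [Composition.sizeUpTo_zero] using this
  omega

lemma clsOf_cons_getD (α : Composition n) (i : ℕ) (hi : i ≤ α.length) :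
    (n :: clsOf α).getD i 0 = n - α.sizeUpTo i := by
  cases i with
  | zero => simp [Composition.sizeUpTo_zero]
  | succ k =>
    have hk : k < α.length := hi
    show (clsOf α).getD k 0 = _
    rw [List.getD_eq_getElem _ _ (by rw [length_clsOf]; exact hk), clsOf_getElem]
end Imm

section Imm2
variable {n : ℕ}

lemma clsOf_inj (hn : 0 < n) {α β : Composition n} (h : clsOf α = clsOf β) : α = β := by
  have hlen : α.length = β.length := by
    rw [← length_clsOf α, ← length_clsOf β, h]
  have hsz : ∀ i : ℕ, i ≤ α.length → α.sizeUpTo i = β.sizeUpTo i := by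
    intro i hi
    cases i with
    | zero => simp [Composition.sizeUpTo_zero]
    | succ k =>
      have hk : k < α.length := hi
      have h1 := clsOf_getElem α k (by rw [length_clsOf]; exact hk)
      have h2 := clsOf_getElem β k (by rw [length_clsOf, ← hlen]; exact hk)
      have h3 : (clsOf α)[k]'(by rw [length_clsOf]; exact hk) =
          (clsOf β)[k]'(by rw [length_clsOf, ← hlen]; exact hk) := by
        congr 1
      rw [h1, h2] at h3
      have h4 := α.sizeUpTo_le (k + 1)
      have h5 := β.sizeUpTo_le (k + 1)
      omega
  apply Composition.ext
  apply List.ext_getElem (by show α.length = β.length; exact hlen)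
  intro k h1k h2k
  have hk : k < α.length := h1k
  have e1 : α.blocks[k] = α.sizeUpTo (k + 1) - α.sizeUpTo k := by
    have := α.sizeUpTo_succ h1k; omega
  have e2 : β.blocks[k] = β.sizeUpTo (k + 1) - β.sizeUpTo k := by
    have := β.sizeUpTo_succ h2k; omega
  rw [e1, e2, hsz k (by omega), hsz (k + 1) (by omega)]

lemma tele : ∀ (c : List ℕ) (m : ℕ), List.Chain (· > ·) m c →
    (List.ofFn (fun i : Fin c.length => (m :: c).getD i 0 - c.getD i 0)).sum +
      c.getLastD m = m := by
  intro c
  induction c with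
  | nil => intro m _; simp
  | cons x c ih =>
    intro m hch
    simp only [List.Chain, List.isChain_cons_cons] at hch
    have ihx := ih x hch.2
    rw [List.ofFn_succ, List.sum_cons, List.getLastD_cons]
    have hf : (fun i : Fin c.length =>
        (m :: x :: c).getD ((Fin.succ i : Fin (c.length + 1)) : ℕ) 0 -
          (x :: c).getD ((Fin.succ i : Fin (c.length + 1)) : ℕ) 0) =
        (fun i : Fin c.length => (x :: c).getD i 0 - c.getD i 0) := rfl
    show (m :: x :: c).getD 0 0 - (x :: c).getD 0 0 +
      (List.ofFn _).sum + c.getLastD x = m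
    rw [hf]
    have hmx : x < m := hch.1
    show m - x + (List.ofFn fun i : Fin c.length => (x :: c).getD i 0 - c.getD i 0).sum +
      c.getLastD x = m
    omega

-- entries of (n :: cls) are ≤ n, and positivity facts
lemma imm_getD_le (hn : 0 < n) (t : Immacutation n) (i : ℕ) :
    (n :: t.cls).getD i 0 ≤ n := by
  cases i with
  | zero => exact le_rfl
  | succ k =>
    show t.cls.getD k 0 ≤ n
    rcases Nat.lt_or_ge k t.cls.length with hk | hk
    · rw [List.getD_eq_getElem _ _ hk]
      have := sorted_le_head t.cls_ne t.cls_sorted _ (List.getElem_mem hk)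
      have := t.cls_head
      omega
    · rw [List.getD_eq_default _ _ hk]; omega

lemma imm_getD_lt (hn : 0 < n) (t : Immacutation n) (i : ℕ) (hi : i < t.cls.length) :
    t.cls.getD i 0 < (n :: t.cls).getD i 0 := by
  cases i with
  | zero =>
    show t.cls.getD 0 0 < n
    rw [List.getD_eq_getElem _ _ hi, ← List.head_eq_getElem_zero t.cls_ne]
    have := t.cls_head
    omega
  | succ k =>
    show t.cls.getD (k + 1) 0 < t.cls.getD k 0
    rw [List.getD_eq_getElem _ _ hi, List.getD_eq_getElem _ _ (by omega)]
    exact List.pairwise_iff_getElem.1 t.cls_sorted k (k + 1) (by omega) hi (by omega)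

def blocksOf (t : Immacutation n) : List ℕ :=
  List.ofFn (fun i : Fin t.cls.length => (n :: t.cls).getD i 0 - t.cls.getD i 0)

def compOf (hn : 0 < n) (t : Immacutation n) : Composition n where
  blocks := blocksOf t
  blocks_pos := by
    intro x hx
    rw [blocksOf] at hx
    obtain ⟨i, rfl⟩ := List.mem_ofFn.1 hx
    have := imm_getD_lt hn t i i.isLt
    show 0 < (n :: t.cls).getD (i : ℕ) 0 - t.cls.getD (i : ℕ) 0
    omega
  blocks_sum := by
    have hch : List.Chain (· > ·) n t.cls := by
      show List.IsChain (· > ·) (n :: t.cls)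
      refine List.Pairwise.isChain ?_
      rw [List.pairwise_cons]
      refine ⟨fun y hy => ?_, t.cls_sorted⟩
      have h1 := sorted_le_head t.cls_ne t.cls_sorted y hy
      have h2 := t.cls_head
      omega
    have h := tele t.cls n hch
    rw [getLastD_eq_getLast t.cls_ne, t.cls_last] at h
    rw [blocksOf]
    omega

lemma compOf_length (hn : 0 < n) (t : Immacutation n) :
    (compOf hn t).length = t.cls.length := by
  show (blocksOf t).length = _
  simp [blocksOf]

lemma compOf_sizeUpTo (hn : 0 < n) (t : Immacutation n) :
    ∀ i ≤ t.cls.length, (compOf hn t).sizeUpTo i = n - (n :: t.cls).getD i 0 := by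
  intro i
  induction i with
  | zero => intro _; simp [Composition.sizeUpTo_zero]
  | succ k ih =>
    intro hk
    have hk' : k < t.cls.length := hk
    have hk'' : k < (compOf hn t).length := by rw [compOf_length]; exact hk'
    rw [(compOf hn t).sizeUpTo_succ hk'', ih (by omega)]
    have hblk : (compOf hn t).blocks[k]'(by
        have : (compOf hn t).blocks.length = t.cls.length := by
          show (blocksOf t).length = _; simp [blocksOf]
        omega) = (n :: t.cls).getD k 0 - t.cls.getD k 0 := by
      show (blocksOf t)[k]'_ = _
      simp only [blocksOf, List.getElem_ofFn]
    rw [hblk]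
    have h1 := imm_getD_le hn t k
    have h2 := imm_getD_lt hn t k hk'
    have h3 : (n :: t.cls).getD (k + 1) 0 = t.cls.getD k 0 := rfl
    rw [h3]
    omega

lemma clsOf_compOf (hn : 0 < n) (t : Immacutation n) : clsOf (compOf hn t) = t.cls := by
  apply List.ext_getElem (by rw [length_clsOf, compOf_length])
  intro k h1k h2k
  have hk : k < t.cls.length := h2k
  rw [clsOf_getElem]
  rw [compOf_sizeUpTo hn t (k + 1) (by omega)]
  have h1 := imm_getD_le hn t (k + 1)
  have h3 : (n :: t.cls).getD (k + 1) 0 = t.cls.getD k 0 := rfl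
  rw [h3] at h1 ⊢
  rw [List.getD_eq_getElem _ _ hk]
  rw [List.getD_eq_getElem _ _ hk] at h1
  omega
end Imm2

section Big
variable {n : ℕ}

lemma ofFn_pairs_getD {α : Composition n} (e₁ e₂ : Enc α) (i : ℕ) (hi : i < α.length) :
    (List.ofFn (fun i : Fin α.length => ((e₁ i).1, (e₂ i).1))).getD i (∅, ∅) =
      ((e₁ ⟨i, hi⟩).1, (e₂ ⟨i, hi⟩).1) := by
  rw [List.getD_eq_getElem _ _ (by simpa using hi), List.getElem_ofFn]

lemma nsub_sizeUpTo (hn : 0 < n) (α : Composition n) (i : ℕ) (hi : i ≤ α.length) :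
    (n :: clsOf α).getD i 0 - 1 = n - α.sizeUpTo i - 1 := by
  rw [clsOf_cons_getD α i hi]

lemma card_arith (α : Composition n) (i : Fin α.length) :
    n - α.sizeUpTo i - 1 - (n - α.sizeUpTo ((i : ℕ) + 1)) = α.blocksFun i - 1 := by
  have h1 := α.sizeUpTo_succ' i
  have h2 := α.sizeUpTo_le ((i : ℕ) + 1)
  have h3 := α.one_le_blocksFun i
  omega

noncomputable def bigMap (hn : 0 < n) (p : Σ α : Composition n, Enc α × Enc α) :
    Immacutation n where
  cls := clsOf p.1
  sets := List.ofFn (fun i : Fin p.1.length => ((p.2.1 i).1, (p.2.2 i).1))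
  cls_ne := clsOf_ne hn p.1
  cls_sorted := clsOf_sorted p.1
  cls_last := clsOf_last hn p.1
  cls_head := clsOf_head hn p.1
  len_eq := by simp [length_clsOf]
  subset_fst := by
    intro i hi
    have hi' : i < p.1.length := by rwa [length_clsOf] at hi
    rw [ofFn_pairs_getD p.2.1 p.2.2 i hi', nsub_sizeUpTo hn p.1 i (le_of_lt hi')]
    exact (p.2.1 ⟨i, hi'⟩).2.1
  subset_snd := by
    intro i hi
    have hi' : i < p.1.length := by rwa [length_clsOf] at hi
    rw [ofFn_pairs_getD p.2.1 p.2.2 i hi', nsub_sizeUpTo hn p.1 i (le_of_lt hi')]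
    exact (p.2.2 ⟨i, hi'⟩).2.1
  card_fst := by
    intro i hi
    have hi' : i < p.1.length := by rwa [length_clsOf] at hi
    rw [ofFn_pairs_getD p.2.1 p.2.2 i hi', nsub_sizeUpTo hn p.1 i (le_of_lt hi'),
      List.getD_eq_getElem _ _ hi, clsOf_getElem]
    rw [card_arith p.1 ⟨i, hi'⟩]
    exact (p.2.1 ⟨i, hi'⟩).2.2
  card_snd := by
    intro i hi
    have hi' : i < p.1.length := by rwa [length_clsOf] at hi
    rw [ofFn_pairs_getD p.2.1 p.2.2 i hi', nsub_sizeUpTo hn p.1 i (le_of_lt hi'),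
      List.getD_eq_getElem _ _ hi, clsOf_getElem]
    rw [card_arith p.1 ⟨i, hi'⟩]
    exact (p.2.2 ⟨i, hi'⟩).2.2

lemma bigMap_bijective (hn : 0 < n) : Function.Bijective (bigMap hn) := by
  constructor
  · rintro ⟨α, e₁, e₂⟩ ⟨β, f₁, f₂⟩ h
    have hcls : clsOf α = clsOf β := congrArg Immacutation.cls h
    have hαβ : α = β := clsOf_inj hn hcls
    subst hαβ
    have hsets := congrArg Immacutation.sets h
    rw [show (bigMap hn ⟨α, e₁, e₂⟩).sets =
      List.ofFn (fun i : Fin α.length => ((e₁ i).1, (e₂ i).1)) from rfl] at hsets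
    rw [show (bigMap hn ⟨α, f₁, f₂⟩).sets =
      List.ofFn (fun i : Fin α.length => ((f₁ i).1, (f₂ i).1)) from rfl] at hsets
    rw [List.ofFn_inj] at hsets
    have h1 : e₁ = f₁ := funext fun i => Subtype.ext (congrArg Prod.fst (congrFun hsets i))
    have h2 : e₂ = f₂ := funext fun i => Subtype.ext (congrArg Prod.snd (congrFun hsets i))
    rw [h1, h2]
  · intro t
    set α := compOf hn t with hα
    have hlen : α.length = t.cls.length := compOf_length hn t
    have hgd : ∀ i : ℕ, i ≤ α.length → n - α.sizeUpTo i = (n :: t.cls).getD i 0 := by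
      intro i hi
      rw [compOf_sizeUpTo hn t i (by omega)]
      have := imm_getD_le hn t i
      omega
    have hbf : ∀ i : Fin α.length,
        α.blocksFun i = (n :: t.cls).getD i 0 - t.cls.getD i 0 := by
      intro i
      have : α.blocksFun i = (blocksOf t)[(i : ℕ)]'(by
          have : (blocksOf t).length = t.cls.length := by simp [blocksOf]
          omega) := rfl
      rw [this]
      simp only [blocksOf, List.getElem_ofFn]
    have hEnc1 : ∀ i : Fin α.length,
        (t.sets.getD i (∅, ∅)).1 ⊆ Finset.Icc 1 (n - α.sizeUpTo i - 1) ∧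
          (t.sets.getD i (∅, ∅)).1.card = α.blocksFun i - 1 := by
      intro i
      have hi : (i : ℕ) < t.cls.length := by omega
      constructor
      · rw [hgd i (le_of_lt i.isLt)]
        exact t.subset_fst i hi
      · rw [hbf i]
        have h1 := t.card_fst i hi
        have h2 := imm_getD_lt hn t i hi
        have h3 : (n :: t.cls).getD ((i : ℕ)) 0 ≤ n := imm_getD_le hn t i
        omega
    have hEnc2 : ∀ i : Fin α.length,
        (t.sets.getD i (∅, ∅)).2 ⊆ Finset.Icc 1 (n - α.sizeUpTo i - 1) ∧
          (t.sets.getD i (∅, ∅)).2.card = α.blocksFun i - 1 := by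
      intro i
      have hi : (i : ℕ) < t.cls.length := by omega
      constructor
      · rw [hgd i (le_of_lt i.isLt)]
        exact t.subset_snd i hi
      · rw [hbf i]
        have h1 := t.card_snd i hi
        have h2 := imm_getD_lt hn t i hi
        omega
    set E1 : Enc α := fun i => ⟨(t.sets.getD i (∅, ∅)).1, (hEnc1 i).1, (hEnc1 i).2⟩ with hE1
    set E2 : Enc α := fun i => ⟨(t.sets.getD i (∅, ∅)).2, (hEnc2 i).1, (hEnc2 i).2⟩ with hE2
    refine ⟨⟨α, E1, E2⟩, ?_⟩
    apply Immacutation.ext'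
    · exact clsOf_compOf hn t
    · rw [show (bigMap hn ⟨α, E1, E2⟩).sets =
        List.ofFn (fun i : Fin α.length => ((E1 i).1, (E2 i).1)) from rfl]
      apply List.ext_getElem (by simp [hlen, t.len_eq])
      intro k h1k h2k
      rw [List.getElem_ofFn]
      show ((t.sets.getD k (∅, ∅)).1, (t.sets.getD k (∅, ∅)).2) = t.sets[k]
      rw [List.getD_eq_getElem _ _ h2k]
end Big

/-- For every positive integer `n`, the number of immacutations of order `n` equals
`∑_{α ⊨ n} (g^α)²`; in other words, there is a bijection between pairs of standard
immaculate tableaux of a common shape `α ⊨ n` and immacutations of order `n`. -/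
theorem card_immacutation_eq_sum_sq_standard_immaculate (n : ℕ) (hn : 0 < n) :
    Nat.card (Immacutation n) = ∑ α : Composition n, (g α) ^ 2 ∧
      Nonempty ((Σ α : Composition n,
        {T : ImmaculateCells α ≃ Fin n // IsStandardImmaculate α T} ×
          {T : ImmaculateCells α ≃ Fin n // IsStandardImmaculate α T}) ≃
        Immacutation n) := by
  have hbig := bigMap_bijective (n := n) hn
  constructor
  · rw [← Nat.card_eq_of_bijective _ hbig, nat_card_sigma]
    apply Finset.sum_congr rfl
    intro α _
    rw [Nat.card_prod, card_Enc, ← g_eq, sq]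
  · have key : ∀ α : Composition n,
        Nonempty ({T : ImmaculateCells α ≃ Fin n // IsStandardImmaculate α T} ≃ Enc α) := by
      intro α
      have h1 : Nat.card {T : ImmaculateCells α ≃ Fin n // IsStandardImmaculate α T} =
          Nat.card (Enc α) := by
        rw [card_Enc, ← g_eq α]
        rfl
      letI : Fintype {T : ImmaculateCells α ≃ Fin n // IsStandardImmaculate α T} :=
        Fintype.ofFinite _
      exact ⟨Fintype.equivOfCardEq
        (by rwa [← Nat.card_eq_fintype_card, ← Nat.card_eq_fintype_card])⟩
    exact ⟨(Equiv.sigmaCongrRight fun α =>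
      Equiv.prodCongr (Classical.choice (key α)) (Classical.choice (key α))).trans
      (Equiv.ofBijective _ hbig)⟩
end

section
/- For every positive integer n, there exists a finite monoid M with cardinality |M| = ∑_{α ⊨ n} (g^α)^2 and an isomorphism of ℂ-algebras between the immaculate algebra ℂI_n = ⊕_{α ⊨ n} M_{g^α}(ℂ) and the monoid algebra ℂ[M]. -/
set_option linter.unusedSectionVars false
open Matrix

lemma stdOne {m : Type*} [Fintype m] [DecidableEq m] [Subsingleton m] (a b : m) :
    Matrix.single a b (1:ℂ) = 1 := by
  ext r s
  simp [Matrix.single, Matrix.one_apply, Subsingleton.elim a r, Subsingleton.elim b s,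
    Subsingleton.elim r s]

section Gadget
variable {ι : Type} [Fintype ι] [DecidableEq ι] (d : ι → ℕ) (i₀ i₁ : ι)

/-- blocks of matrix units -/
noncomputable def Fm (x : Σ i : ι, Fin (d i) × Fin (d i)) (j : ι) :
    Matrix (Fin (d j)) (Fin (d j)) ℂ :=
  if x.1 = i₁ then 1
  else if h : x.1 = j then
    Matrix.single (Fin.cast (congrArg d h) x.2.1) (Fin.cast (congrArg d h) x.2.2) 1
  else if j = i₀ then 1 else 0

variable {d i₀ i₁}

lemma Fm_one (a b : Fin (d i₁)) :
    (Fm d i₀ i₁ ⟨i₁, a, b⟩ : ∀ j, Matrix (Fin (d j)) (Fin (d j)) ℂ) = 1 := by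
  funext j; simp [Fm]

lemma Fm_self {i : ι} (hi : i ≠ i₁) (a b : Fin (d i)) :
    Fm d i₀ i₁ ⟨i, a, b⟩ i = Matrix.single a b 1 := by
  simp only [Fm, if_neg hi, dif_pos rfl]
  congr

lemma Fm_other {i : ι} (hi : i ≠ i₁) (a b : Fin (d i)) {j : ι} (hj : i ≠ j) :
    Fm d i₀ i₁ ⟨i, a, b⟩ j = if j = i₀ then 1 else 0 := by
  simp only [Fm, if_neg hi, dif_neg hj]

variable (h01 : i₀ ≠ i₁) (hd0 : d i₀ = 1) (hd1 : d i₁ = 1)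

section
include hd0

lemma sub0 : Subsingleton (Fin (d i₀)) := by rw [hd0]; infer_instance

/-- the zero element of the monoid, as an index -/
noncomputable def zIdx : Σ i : ι, Fin (d i) × Fin (d i) :=
  ⟨i₀, Fin.cast hd0.symm 0, Fin.cast hd0.symm 0⟩

include h01
lemma Fm_z (j : ι) : Fm d i₀ i₁ (zIdx hd0) j = if j = i₀ then 1 else 0 := by
  haveI := sub0 hd0
  by_cases h : j = i₀
  · subst h; simp [Fm, zIdx, if_neg h01, stdOne]
  · simp [Fm, zIdx, if_neg h01, h, Ne.symm h]
end

include h01 hd0 hd1 in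
lemma Fm_mul (x y : Σ i : ι, Fin (d i) × Fin (d i)) :
    ∃ z, Fm d i₀ i₁ x * Fm d i₀ i₁ y = Fm d i₀ i₁ z := by
  haveI := sub0 hd0
  obtain ⟨i, a, b⟩ := x
  obtain ⟨k, c, e⟩ := y
  rcases eq_or_ne i i₁ with rfl | hi
  · exact ⟨⟨k, c, e⟩, by rw [Fm_one, one_mul]⟩
  rcases eq_or_ne k i₁ with rfl | hk
  · exact ⟨⟨i, a, b⟩, by rw [Fm_one, mul_one]⟩
  rcases eq_or_ne i k with rfl | hik
  · rcases eq_or_ne b c with rfl | hbc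
    · -- same block, matching indices
      refine ⟨⟨i, a, e⟩, ?_⟩
      funext j
      rcases eq_or_ne i j with rfl | hj
      · rw [Pi.mul_apply, Fm_self hi, Fm_self hi, Fm_self hi,
          single_mul_single_same, one_mul]
      · rw [Pi.mul_apply, Fm_other hi _ _ hj, Fm_other hi _ _ hj, Fm_other hi _ _ hj]
        split <;> simp
    · -- same block, mismatch: zero
      have hii0 : i ≠ i₀ := by
        rintro rfl
        haveI := sub0 hd0
        exact hbc (Subsingleton.elim b c)
      refine ⟨zIdx hd0, ?_⟩
      funext j
      rw [Pi.mul_apply, Fm_z h01 hd0]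
      rcases eq_or_ne i j with rfl | hj
      · rw [Fm_self hi, Fm_self hi, single_mul_single_of_ne (h := hbc), if_neg hii0]
      · rw [Fm_other hi _ _ hj, Fm_other hi _ _ hj]
        split <;> simp
  · -- different blocks: zero
    refine ⟨zIdx hd0, ?_⟩
    funext j
    rw [Pi.mul_apply, Fm_z h01 hd0]
    rcases eq_or_ne i j with rfl | hij
    · rw [Fm_self hi, Fm_other hk _ _ (Ne.symm hik)]
      rcases eq_or_ne i i₀ with rfl | hi0
      · simp [stdOne]
      · simp [if_neg hi0]
    rcases eq_or_ne k j with rfl | hkj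
    · rw [Fm_self hk, Fm_other hi _ _ hij]
      rcases eq_or_ne k i₀ with rfl | hk0
      · simp [stdOne]
      · simp [if_neg hk0]
    · rw [Fm_other hi _ _ hij, Fm_other hk _ _ hkj]
      split <;> simp
end Gadget

section Inj
variable {ι : Type} [Fintype ι] [DecidableEq ι] {d : ι → ℕ} {i₀ i₁ : ι}
  (h01 : i₀ ≠ i₁) (hd0 : d i₀ = 1) (hd1 : d i₁ = 1)

include h01 hd1 in
lemma Fm_at_one (i : ι) (a b : Fin (d i)) :
    Fm d i₀ i₁ ⟨i, a, b⟩ i₁ = if i = i₁ then 1 else 0 := by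
  rcases eq_or_ne i i₁ with rfl | hi
  · rw [if_pos rfl]; exact congrFun (Fm_one a b) _
  · rw [Fm_other hi _ _ hi, if_neg (Ne.symm h01), if_neg hi]

include h01 hd0 hd1 in
lemma Fm_inj : Function.Injective (Fm d i₀ i₁) := by
  haveI hne1 : Nonempty (Fin (d i₁)) := by rw [hd1]; infer_instance
  haveI hs1 : Subsingleton (Fin (d i₁)) := by rw [hd1]; infer_instance
  have hone : (1 : Matrix (Fin (d i₁)) (Fin (d i₁)) ℂ) ≠ 0 := by
    intro hc
    obtain ⟨x⟩ := hne1
    have := congrFun (congrFun hc x) x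
    simp [Matrix.one_apply] at this
  rintro ⟨i, a, b⟩ ⟨k, c, e⟩ h
  have h1 := congrFun h i₁
  rw [Fm_at_one h01 hd1, Fm_at_one h01 hd1] at h1
  rcases eq_or_ne i i₁ with rfl | hi
  · rw [if_pos rfl] at h1
    have hk : k = i := by
      by_contra hk
      rw [if_neg hk] at h1
      exact hone h1
    subst hk
    exact Sigma.ext rfl (heq_of_eq (Subsingleton.elim _ _))
  · rw [if_neg hi] at h1
    have hk : k ≠ i₁ := by
      rintro rfl
      rw [if_pos rfl] at h1
      exact hone h1.symm
    have hik : i = k := by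
      by_contra hik
      have hak := congrFun h k
      rw [Fm_other hi _ _ hik, Fm_self hk] at hak
      by_cases hk0 : k = i₀
      · have hai := congrFun h i
        rw [Fm_self hi, Fm_other hk _ _ (Ne.symm hik),
          if_neg (fun hh => hik (hh.trans hk0.symm))] at hai
        have := congrFun (congrFun hai a) b
        rw [Matrix.single_apply_same] at this
        simp at this
      · rw [if_neg hk0] at hak
        have := congrFun (congrFun hak c) e
        rw [Matrix.single_apply_same] at this
        simp at this
    subst hik
    have hai := congrFun h i
    rw [Fm_self hi, Fm_self hi] at hai
    have hab := congrFun (congrFun hai a) b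
    rw [Matrix.single_apply_same] at hab
    have hce : c = a ∧ e = b := by
      by_contra hcon
      rw [Matrix.single_apply_of_ne (h := hcon)] at hab
      simp at hab
    obtain ⟨rfl, rfl⟩ := hce
    rfl
end Inj

open Module in
lemma helper {M : Type} [Monoid M] [Fintype M] {A : Type} [Ring A] [Algebra ℂ A]
    [FiniteDimensional ℂ A] (f : M →* A)
    (hsurj : Function.Surjective (MonoidAlgebra.lift ℂ A M f))
    (hdim : Fintype.card M = finrank ℂ A) :
    Nonempty (MonoidAlgebra ℂ M ≃ₐ[ℂ] A) := by
  haveI : FiniteDimensional ℂ (MonoidAlgebra ℂ M) :=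
    Module.Finite.of_basis (MonoidAlgebra.basis M ℂ : Basis M ℂ (MonoidAlgebra ℂ M))
  have hrk : finrank ℂ (MonoidAlgebra ℂ M) = finrank ℂ A :=
    (finrank_eq_card_basis (MonoidAlgebra.basis M ℂ : Basis M ℂ (MonoidAlgebra ℂ M))).trans hdim
  have hinj : Function.Injective (MonoidAlgebra.lift ℂ A M f) :=
    (LinearMap.injective_iff_surjective_of_finrank_eq_finrank
      (f := (MonoidAlgebra.lift ℂ A M f).toLinearMap) hrk).2 hsurj
  exact ⟨AlgEquiv.ofBijective (MonoidAlgebra.lift ℂ A M f) ⟨hinj, hsurj⟩⟩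

section Main
variable {ι : Type} [Fintype ι] [DecidableEq ι] (d : ι → ℕ) (i₀ i₁ : ι)
  (h01 : i₀ ≠ i₁) (hd0 : d i₀ = 1) (hd1 : d i₁ = 1)

include h01 hd0 hd1 in
lemma gadget : ∃ (M : Type) (_ : Monoid M) (_ : Fintype M),
    Fintype.card M = ∑ i, (d i) ^ 2 ∧
      Nonempty (MonoidAlgebra ℂ M ≃ₐ[ℂ] ∀ j, Matrix (Fin (d j)) (Fin (d j)) ℂ) := by
  classical
  haveI hs0 : Subsingleton (Fin (d i₀)) := by rw [hd0]; infer_instance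
  haveI hs1 : Subsingleton (Fin (d i₁)) := by rw [hd1]; infer_instance
  set A := ∀ j, Matrix (Fin (d j)) (Fin (d j)) ℂ with hA
  let S : Submonoid A :=
    { carrier := Set.range (Fm d i₀ i₁)
      one_mem' := ⟨⟨i₁, Fin.cast hd1.symm 0, Fin.cast hd1.symm 0⟩, Fm_one _ _⟩
      mul_mem' := by
        rintro x y ⟨u, rfl⟩ ⟨v, rfl⟩
        obtain ⟨z, hz⟩ := Fm_mul h01 hd0 hd1 u v
        exact ⟨z, hz.symm⟩ }
  let e : (Σ i : ι, Fin (d i) × Fin (d i)) ≃ S :=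
    Equiv.ofBijective (fun x => ⟨Fm d i₀ i₁ x, ⟨x, rfl⟩⟩)
      ⟨fun u v h => Fm_inj h01 hd0 hd1 (Subtype.ext_iff.1 h),
       by rintro ⟨w, x, hx⟩; exact ⟨x, Subtype.ext hx⟩⟩
  haveI : Fintype S := Fintype.ofEquiv _ e
  have hcard : Fintype.card S = ∑ i, (d i) ^ 2 := by
    rw [← Fintype.card_congr e]
    simp [sq]
  -- the lift
  let φ := MonoidAlgebra.lift ℂ A S S.subtype
  have hmem : ∀ x, Fm d i₀ i₁ x ∈ φ.range := by
    intro x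
    refine ⟨MonoidAlgebra.single (⟨Fm d i₀ i₁ x, ⟨x, rfl⟩⟩ : S) 1, ?_⟩
    simp [φ, MonoidAlgebra.lift_single]
  have hz : Pi.single i₀ (1 : Matrix (Fin (d i₀)) (Fin (d i₀)) ℂ) ∈ φ.range := by
    have : Pi.single i₀ (1 : Matrix (Fin (d i₀)) (Fin (d i₀)) ℂ) = Fm d i₀ i₁ (zIdx hd0) := by
      funext j
      rw [Fm_z h01 hd0]
      rcases eq_or_ne j i₀ with rfl | hj
      · rw [if_pos rfl, Pi.single_eq_same]
      · rw [if_neg hj, Pi.single_eq_of_ne hj]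
    rw [this]; exact hmem _
  have hstep1 : ∀ (i : ι), i ≠ i₁ → ∀ (a b : Fin (d i)),
      Pi.single i (Matrix.single a b (1:ℂ)) ∈ φ.range := by
    intro i hi a b
    rcases eq_or_ne i i₀ with rfl | hi0
    · rw [stdOne]; exact hz
    · have : Pi.single i (Matrix.single a b (1:ℂ)) =
          Fm d i₀ i₁ ⟨i, a, b⟩ - Fm d i₀ i₁ (zIdx hd0) := by
        funext j
        rw [Pi.sub_apply, Fm_z h01 hd0]
        rcases eq_or_ne j i with rfl | hj
        · rw [Fm_self hi, if_neg hi0, sub_zero, Pi.single_eq_same]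
        · rw [Fm_other hi _ _ (Ne.symm hj), Pi.single_eq_of_ne hj, sub_self]
      rw [this]
      exact sub_mem (hmem _) (hmem _)
  have hone_eq : ∀ i : ι, (1 : Matrix (Fin (d i)) (Fin (d i)) ℂ) =
      ∑ a, Matrix.single a a 1 := by
    intro i
    ext r s
    have hv : ∀ a : Fin (d i), (Matrix.single a a (1:ℂ)) r s
        = if a = r ∧ a = s then 1 else 0 := fun a => rfl
    rcases eq_or_ne r s with rfl | h
    · simp only [Matrix.sum_apply, hv, Matrix.one_apply_eq]
      simp
    · simp only [Matrix.sum_apply, hv, Matrix.one_apply_ne h]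
      symm
      refine Finset.sum_eq_zero fun a _ => ?_
      exact if_neg fun hh : a = r ∧ a = s => h (hh.1.symm.trans hh.2)
  have hstep2 : ∀ (i : ι), i ≠ i₁ →
      Pi.single i (1 : Matrix (Fin (d i)) (Fin (d i)) ℂ) ∈ φ.range := by
    intro i hi
    have hsum : (Pi.single i (∑ a : Fin (d i), Matrix.single a a (1:ℂ)) : A) =
        ∑ a : Fin (d i), (Pi.single i (Matrix.single a a (1:ℂ)) : A) :=
      map_sum (AddMonoidHom.single (fun j => Matrix (Fin (d j)) (Fin (d j)) ℂ) i)
        (fun a => Matrix.single a a (1:ℂ)) Finset.univ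
    rw [hone_eq i, hsum]
    exact sum_mem fun a _ => hstep1 i hi a a
  have htot : ∑ i : ι, Pi.single i (1 : Matrix (Fin (d i)) (Fin (d i)) ℂ) = (1 : A) := by
    have := Finset.univ_sum_single (1 : A)
    exact this
  have hstep3 : Pi.single i₁ (1 : Matrix (Fin (d i₁)) (Fin (d i₁)) ℂ) ∈ φ.range := by
    have heq : Pi.single i₁ (1 : Matrix (Fin (d i₁)) (Fin (d i₁)) ℂ) =
        (1 : A) - ∑ i ∈ Finset.univ.erase i₁,
          Pi.single i (1 : Matrix (Fin (d i)) (Fin (d i)) ℂ) := by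
      rw [Finset.sum_erase_eq_sub (Finset.mem_univ i₁), htot]
      abel
    rw [heq]
    exact sub_mem (one_mem _) (sum_mem fun i hi => hstep2 i (Finset.ne_of_mem_erase hi))
  have hstep1' : ∀ (i : ι) (a b : Fin (d i)),
      Pi.single i (Matrix.single a b (1:ℂ)) ∈ φ.range := by
    intro i a b
    rcases eq_or_ne i i₁ with rfl | hi
    · rw [stdOne]; exact hstep3
    · exact hstep1 i hi a b
  have hstep4 : ∀ (i : ι) (m : Matrix (Fin (d i)) (Fin (d i)) ℂ),
      Pi.single i m ∈ φ.range := by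
    intro i m
    have hsum : ∀ (s : Finset (Fin (d i))) (f : Fin (d i) → Matrix (Fin (d i)) (Fin (d i)) ℂ),
        (Pi.single i (∑ a ∈ s, f a) : A) = ∑ a ∈ s, (Pi.single i (f a) : A) := fun s f =>
      map_sum (AddMonoidHom.single (fun j => Matrix (Fin (d j)) (Fin (d j)) ℂ) i) f s
    rw [matrix_eq_sum_single m, hsum]
    refine sum_mem fun a _ => ?_
    rw [hsum]
    refine sum_mem fun b _ => ?_
    have : Matrix.single a b (m a b) = (m a b) • Matrix.single a b (1:ℂ) := by
      rw [smul_single, smul_eq_mul, mul_one]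
    rw [this]
    have h1 : (Pi.single i ((m a b) • Matrix.single a b (1:ℂ)) : A)
        = (m a b) • (Pi.single i (Matrix.single a b (1:ℂ)) : A) := by
      rw [Pi.single_smul]
    rw [h1]
    exact Subalgebra.smul_mem _ (hstep1' i a b) _
  have hsurj : Function.Surjective φ := by
    intro v
    have : v ∈ φ.range := by
      rw [← Finset.univ_sum_single v]
      exact sum_mem fun i _ => hstep4 i (v i)
    exact this
  have hdim : Fintype.card S = Module.finrank ℂ A := by
    rw [hcard, Module.finrank_pi_fintype]
    simp [Module.finrank_matrix, sq]
  obtain ⟨ψ⟩ := helper S.subtype hsurj hdim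
  exact ⟨S, inferInstance, inferInstance, hcard, ⟨ψ⟩⟩
end Main

lemma g_ones (n : ℕ) : g (Composition.ones n) = 1 := by
  set c := Composition.ones n with hc
  have hL : c.length = n := Composition.ones_length n
  have hb : ∀ i, c.blocksFun i = 1 := Composition.ones_blocksFun n
  haveI hsub : ∀ i : Fin c.length, Subsingleton (Fin (c.blocksFun i)) := fun i => by
    rw [hb i]; infer_instance
  rw [g, Nat.card_eq_one_iff_unique]
  constructor
  · constructor
    rintro ⟨T, hT⟩ ⟨T', hT'⟩
    have key : ∀ (U : ImmaculateCells c ≃ Fin n), Function.Surjective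
        (fun i : Fin c.length => U ⟨i, ⟨0, c.one_le_blocksFun i⟩⟩) := by
      intro U m
      obtain ⟨⟨i', j⟩, hij⟩ := U.surjective m
      refine ⟨i', ?_⟩
      have hj : (⟨0, c.one_le_blocksFun i'⟩ : Fin (c.blocksFun i')) = j :=
        Subsingleton.elim _ _
      show U ⟨i', ⟨0, c.one_le_blocksFun i'⟩⟩ = m
      rw [hj]; exact hij
    have hmono : StrictMono (fun i : Fin c.length => T ⟨i, ⟨0, c.one_le_blocksFun i⟩⟩) :=
      fun i i' h => hT.2 i i' h
    have hmono' : StrictMono (fun i : Fin c.length => T' ⟨i, ⟨0, c.one_le_blocksFun i⟩⟩) :=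
      fun i i' h => hT'.2 i i' h
    haveI : WellFoundedLT (Fin c.length) := inferInstance
    have hrange : Set.range (fun i : Fin c.length => T ⟨i, ⟨0, c.one_le_blocksFun i⟩⟩) =
        Set.range (fun i : Fin c.length => T' ⟨i, ⟨0, c.one_le_blocksFun i⟩⟩) := by
      rw [Set.range_eq_univ.mpr (key T), Set.range_eq_univ.mpr (key T')]
    have heq := (StrictMono.range_inj hmono hmono').1 hrange
    apply Subtype.ext
    apply Equiv.ext
    rintro ⟨i, j⟩
    have hj : (⟨0, c.one_le_blocksFun i⟩ : Fin (c.blocksFun i)) = j := Subsingleton.elim _ _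
    rw [← hj]
    exact congrFun heq i
  · refine ⟨⟨⟨fun x => Fin.cast hL x.1, fun m => ⟨Fin.cast hL.symm m, ⟨0, c.one_le_blocksFun _⟩⟩,
      ?_, ?_⟩, ?_, ?_⟩⟩
    · rintro ⟨i, j⟩
      refine Sigma.ext (Fin.ext rfl) ?_
      have hj1 : (j : ℕ) < 1 := lt_of_lt_of_le j.isLt (le_of_eq (hb i))
      refine (Fin.heq_ext_iff (by congr 1 <;> exact Fin.ext rfl)).2 ?_
      show 0 = (j : ℕ)
      omega
    · intro m
      exact Fin.ext rfl
    · intro i j j' hjj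
      have h1 : (j' : ℕ) < 1 := lt_of_lt_of_le j'.isLt (le_of_eq (hb i))
      have h2 := Fin.lt_def.1 hjj
      have : False := by omega
      exact this.elim
    · intro i i' h
      simp only [Equiv.coe_fn_mk]
      exact Fin.lt_def.2 (Fin.lt_def.1 h)

lemma g_single (n : ℕ) (hn : 0 < n) : g (Composition.single n hn) = 1 := by
  set c := Composition.single n hn with hc
  have hL : c.length = 1 := Composition.single_length hn
  have hb : ∀ i, c.blocksFun i = n := Composition.single_blocksFun hn
  haveI hsubL : Subsingleton (Fin c.length) := by rw [hL]; infer_instance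
  have i0 : Fin c.length := ⟨0, by omega⟩
  rw [g, Nat.card_eq_one_iff_unique]
  constructor
  · constructor
    rintro ⟨T, hT⟩ ⟨T', hT'⟩
    have key : ∀ (U : ImmaculateCells c ≃ Fin n), Function.Surjective
        (fun j : Fin (c.blocksFun i0) => U ⟨i0, j⟩) := by
      intro U m
      obtain ⟨⟨i, j⟩, hij⟩ := U.surjective m
      have hi : i = i0 := Subsingleton.elim _ _
      subst hi
      exact ⟨j, hij⟩
    have hmono : StrictMono (fun j : Fin (c.blocksFun i0) => T ⟨i0, j⟩) :=
      fun j j' h => hT.1 i0 j j' h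
    have hmono' : StrictMono (fun j : Fin (c.blocksFun i0) => T' ⟨i0, j⟩) :=
      fun j j' h => hT'.1 i0 j j' h
    haveI : WellFoundedLT (Fin (c.blocksFun i0)) := inferInstance
    have hrange : Set.range (fun j : Fin (c.blocksFun i0) => T ⟨i0, j⟩) =
        Set.range (fun j : Fin (c.blocksFun i0) => T' ⟨i0, j⟩) := by
      rw [Set.range_eq_univ.mpr (key T), Set.range_eq_univ.mpr (key T')]
    have heq := (StrictMono.range_inj hmono hmono').1 hrange
    apply Subtype.ext
    apply Equiv.ext
    rintro ⟨i, j⟩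
    have hi : i = i0 := Subsingleton.elim _ _
    subst hi
    exact congrFun heq j
  · refine ⟨⟨⟨fun x => Fin.cast (hb x.1) x.2, fun m => ⟨i0, Fin.cast (hb i0).symm m⟩,
      ?_, ?_⟩, ?_, ?_⟩⟩
    · rintro ⟨i, j⟩
      refine Sigma.ext (Subsingleton.elim _ _) ?_
      exact (Fin.heq_ext_iff (by congr 1 <;> exact Subsingleton.elim _ _)).2 rfl
    · intro m
      exact Fin.ext rfl
    · intro i j j' hjj
      exact Fin.lt_def.2 (Fin.lt_def.1 hjj)
    · intro i i' h
      have h1 : (i' : ℕ) < 1 := lt_of_lt_of_le i'.isLt (le_of_eq hL)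
      have h2 := Fin.lt_def.1 h
      have : False := by omega
      exact this.elim

/-- For every positive integer `n`, the immaculate algebra `ℂI_n = ⨁_{α ⊨ n} M_{g^α}(ℂ)` is
isomorphic as a `ℂ`-algebra to the monoid algebra `ℂ[M]` of some finite monoid `M` of
cardinality `∑_{α ⊨ n} (g^α)²`. -/
theorem immaculateAlgebra_is_monoidAlgebra (n : ℕ) (hn : 0 < n) :
    ∃ (M : Type) (_ : Monoid M) (_ : Fintype M),
      Fintype.card M = ∑ α : Composition n, (g α) ^ 2 ∧
        Nonempty (MonoidAlgebra ℂ M ≃ₐ[ℂ]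
          (∀ α : Composition n, Matrix (Fin (g α)) (Fin (g α)) ℂ)) := by
  classical
  rcases eq_or_ne n 1 with rfl | hne
  · haveI hu : Unique (Composition 1) :=
      { default := Composition.ones 1
        uniq := fun c => Composition.eq_ones_iff_le_length.2 (c.length_pos_of_pos one_pos) }
    have hgd : ∀ c : Composition 1, g c = 1 := fun c => by
      rw [show c = Composition.ones 1 from
        Composition.eq_ones_iff_le_length.2 (c.length_pos_of_pos one_pos)]
      exact g_ones 1
    haveI hsg : Subsingleton (Fin (g (default : Composition 1))) := by rw [hgd _]; infer_instance
    refine ⟨PUnit, inferInstance, inferInstance, ?_, ?_⟩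
    · simp [Finset.univ_unique, hgd]
    · refine helper (1 : PUnit →* (∀ α : Composition 1, Matrix (Fin (g α)) (Fin (g α)) ℂ)) ?_ ?_
      · intro v
        have hgd' := hgd (default : Composition 1)
        have x : Fin (g (default : Composition 1)) := ⟨0, by omega⟩
        refine ⟨MonoidAlgebra.single PUnit.unit (v default x x), ?_⟩
        rw [MonoidAlgebra.lift_single]
        show (v default x x) • (1 : ∀ α : Composition 1, Matrix (Fin (g α)) (Fin (g α)) ℂ) = v
        funext α
        have hα : α = default := Subsingleton.elim _ _
        subst hα
        ext r s
        have hr : r = x := Subsingleton.elim _ _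
        have hs : s = x := Subsingleton.elim _ _
        subst hr; subst hs
        simp [Matrix.one_apply]
      · rw [Module.finrank_pi_fintype]
        simp [Finset.univ_unique, Module.finrank_matrix, hgd]
  · have hneq : Composition.ones n ≠ Composition.single n hn := by
      intro h
      have := congrArg Composition.length h
      rw [Composition.ones_length, Composition.single_length] at this
      omega
    exact gadget g (Composition.ones n) (Composition.single n hn) hneq (g_ones n)
      (g_single n hn)
end
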